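/- arXiv:1501.05771 — 9 statements merged into one kernel-verified Lean document; each statement's English description precedes it below -/
import Mathlib

section
/- A trade statistics {(P^t, X^t)}_{t=1}^T is rationalizable in the class Φ_G if and only if there exist real numbers U^1,…,U^T and positive real numbers λ^1,…,λ^T such that U^t ≤ U^s + λ^s(⟨P^s, X^t⟩ − ⟨P^s, X^s⟩) for all t, s ∈ {1,…,T} (the Afriat inequalities). -/
open scoped BigOperators

noncomputable section

/-- Euclidean scalar product of two vectors indexed by `ι`. -/
def dotp {ι : Type*} [Fintype ι] (P X : ι → ℝ) : ℝ := ∑ i, P i * X i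

/-- `ℝ^ι_+` : the set of nonnegative, nonzero vectors. -/
def Rplus (ι : Type*) [Fintype ι] : Set (ι → ℝ) := {X | 0 ≤ X ∧ X ≠ 0}

/-- The class `Φ_G` of nonnegative, nonsatiated, continuous, concave, monotone utility
functions on `ℝ^ι_+` which are positive on the interior of `ℝ^ι_+`. -/
structure IsPhiG {ι : Type*} [Fintype ι] (u : (ι → ℝ) → ℝ) : Prop where
  nonneg : ∀ X ∈ Rplus ι, 0 ≤ u X
  cont : ContinuousOn u (Rplus ι)
  concave : ∀ X ∈ Rplus ι, ∀ Y ∈ Rplus ι, ∀ a b : ℝ,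
    0 ≤ a → 0 ≤ b → a + b = 1 → a * u X + b * u Y ≤ u (a • X + b • Y)
  mono : ∀ X ∈ Rplus ι, ∀ Y ∈ Rplus ι, X ≤ Y → u X ≤ u Y
  pos : ∀ X ∈ interior (Rplus ι), 0 < u X
  nonsatiated : ∀ X ∈ Rplus ι, ∀ ε : ℝ, 0 < ε → ∃ Y ∈ Rplus ι, dist Y X < ε ∧ u X < u Y

/-- The class `Φ_H` : functions in `Φ_G` that are positively homogeneous of degree 1. -/
def IsPhiH {ι : Type*} [Fintype ι] (u : (ι → ℝ) → ℝ) : Prop :=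
  IsPhiG u ∧ ∀ X ∈ Rplus ι, ∀ α : ℝ, 0 < α → u (α • X) = α * u X

/- ### Auxiliary lemmas -/

lemma dotp_nonneg' {ι : Type*} [Fintype ι] {P X : ι → ℝ} (hP : ∀ i, 0 ≤ P i) (hX : 0 ≤ X) :
    0 ≤ dotp P X :=
  Finset.sum_nonneg fun i _ => mul_nonneg (hP i) (hX i)

lemma dotp_mono' {ι : Type*} [Fintype ι] {P X Y : ι → ℝ} (hP : ∀ i, 0 ≤ P i) (h : X ≤ Y) :
    dotp P X ≤ dotp P Y :=
  Finset.sum_le_sum fun i _ => mul_le_mul_of_nonneg_left (h i) (hP i)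

lemma dotp_continuous' {ι : Type*} [Fintype ι] (P : ι → ℝ) : Continuous fun Y => dotp P Y :=
  continuous_finset_sum _ fun i _ => continuous_const.mul (continuous_apply i)

lemma Rplus.exists_pos' {ι : Type*} [Fintype ι] {X : ι → ℝ} (h : X ∈ Rplus ι) :
    ∃ i, 0 < X i := by
  by_contra hc
  push_neg at hc
  exact h.2 (funext fun i => le_antisymm (hc i) (h.1 i))

lemma dotp_pos' {ι : Type*} [Fintype ι] {P Z : ι → ℝ} (hP : ∀ i, 0 < P i) (hZ : Z ∈ Rplus ι) :
    0 < dotp P Z := by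
  obtain ⟨i, hi⟩ := Rplus.exists_pos' hZ
  exact Finset.sum_pos' (fun j _ => mul_nonneg (hP j).le (hZ.1 j))
    ⟨i, Finset.mem_univ i, mul_pos (hP i) hi⟩

lemma dotp_comb' {ι : Type*} [Fintype ι] (P Y Z : ι → ℝ) (a b : ℝ) :
    dotp P (a • Y + b • Z) = a * dotp P Y + b * dotp P Z := by
  simp only [dotp, Finset.mul_sum, Pi.add_apply, Pi.smul_apply, smul_eq_mul]
  rw [← Finset.sum_add_distrib]
  exact Finset.sum_congr rfl fun i _ => by ring

lemma dotp_shift' {ι : Type*} [Fintype ι] (P X : ι → ℝ) (δ : ℝ) :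
    dotp P (fun i => X i + δ) = dotp P X + δ * ∑ i, P i := by
  simp only [dotp, mul_add, Finset.sum_add_distrib, Finset.mul_sum]
  congr 1
  exact Finset.sum_congr rfl fun i _ => by ring

/-- If `W` is strictly inside the budget set of a maximizer `Z`, its utility is strictly
smaller, by nonsatiation. -/
lemma strict_budget' {ι : Type*} [Fintype ι] {u : (ι → ℝ) → ℝ} (hu : IsPhiG u)
    {Q Z : ι → ℝ} (hQ : ∀ i, 0 < Q i) (hZ : Z ∈ Rplus ι)
    (hmax : ∀ Y ∈ Rplus ι, dotp Q Y ≤ dotp Q Z → u Y ≤ u Z)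
    {W : ι → ℝ} (hW : W ∈ Rplus ι) (hlt : dotp Q W < dotp Q Z) :
    u W < u Z := by
  set S : ℝ := ∑ i, Q i with hS
  have hS0 : 0 ≤ S := Finset.sum_nonneg fun i _ => (hQ i).le
  set gap : ℝ := dotp Q Z - dotp Q W with hgap
  have hgap0 : 0 < gap := by simp [hgap]; linarith
  have hε : 0 < gap / (S + 1) := div_pos hgap0 (by linarith)
  obtain ⟨Y, hY, hd, hWY⟩ := hu.nonsatiated W hW _ hε
  have hYbud : dotp Q Y ≤ dotp Q Z := by
    have h1 : dotp Q Y - dotp Q W = ∑ i, Q i * (Y i - W i) := by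
      simp only [dotp, mul_sub, Finset.sum_sub_distrib]
    have h2 : ∀ i, Q i * (Y i - W i) ≤ Q i * dist Y W := fun i =>
      mul_le_mul_of_nonneg_left
        (le_trans (le_trans (le_abs_self _) (le_of_eq (Real.dist_eq _ _).symm))
          (dist_le_pi_dist Y W i)) (hQ i).le
    have h3 : ∑ i, Q i * (Y i - W i) ≤ S * dist Y W := by
      rw [hS, Finset.sum_mul]
      exact Finset.sum_le_sum fun i _ => h2 i
    have h4 : S * dist Y W ≤ S * (gap / (S + 1)) :=
      mul_le_mul_of_nonneg_left hd.le hS0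
    have h5 : S * (gap / (S + 1)) < gap := by
      rw [mul_div_assoc', div_lt_iff₀ (by linarith : (0:ℝ) < S + 1)]
      nlinarith
    have := h1 ▸ (h3.trans (h4.trans h5.le))
    simp [hgap] at this ⊢
    linarith
  exact lt_of_lt_of_le hWY (hmax Y hY hYbud)

/-- Afriat's theorem: a trade statistics is rationalizable in `Φ_G` iff the
Afriat inequalities have a solution with positive multipliers. -/
theorem rationalizable_phiG_iff_afriat {m T : ℕ} (P X : Fin T → Fin m → ℝ)
    (hP : ∀ t i, 0 < P t i) (hX : ∀ t, X t ∈ Rplus (Fin m)) :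
    (∃ u : (Fin m → ℝ) → ℝ, IsPhiG u ∧
      ∀ t, ∀ Y ∈ Rplus (Fin m), dotp (P t) Y ≤ dotp (P t) (X t) → u Y ≤ u (X t)) ↔
    (∃ (U lam : Fin T → ℝ), (∀ t, 0 < lam t) ∧
      ∀ t s : Fin T, U t ≤ U s + lam s * (dotp (P s) (X t) - dotp (P s) (X s))) := by
  classical
  constructor
  · -- Forward direction
    rintro ⟨u, hu, hmax⟩
    set U : Fin T → ℝ := fun t => u (X t) with hUdef
    have hbudget : ∀ t s : Fin T, dotp (P s) (X t) ≤ dotp (P s) (X s) → U t ≤ U s :=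
      fun t s h => hmax s (X t) (hX t) h
    have hstrict : ∀ t s : Fin T, dotp (P s) (X t) < dotp (P s) (X s) → U t < U s :=
      fun t s h => strict_budget' hu (hP s) (hX s) (hmax s) (hX t) h
    -- the cross inequality coming from concavity
    have hcross : ∀ s t t' : Fin T,
        dotp (P s) (X s) < dotp (P s) (X t) → dotp (P s) (X t') < dotp (P s) (X s) →
        (U t - U s) / (dotp (P s) (X t) - dotp (P s) (X s)) ≤
          (U s - U t') / (dotp (P s) (X s) - dotp (P s) (X t')) := by
      intro s t t' hp hq
      set p : ℝ := dotp (P s) (X t) with hpd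
      set q : ℝ := dotp (P s) (X t') with hqd
      set c : ℝ := dotp (P s) (X s) with hcd
      have hpq : (0:ℝ) < p - q := by linarith
      set a : ℝ := (c - q) / (p - q) with had
      set b : ℝ := (p - c) / (p - q) with hbd
      have ha : 0 ≤ a := div_nonneg (by linarith) hpq.le
      have hb : 0 ≤ b := div_nonneg (by linarith) hpq.le
      have hab : a + b = 1 := by
        rw [had, hbd, ← add_div, div_eq_one_iff_eq hpq.ne']
        ring
      set Z : Fin m → ℝ := a • X t + b • X t' with hZd
      have hZdot : dotp (P s) Z = c := by
        rw [hZd, dotp_comb', ← hpd, ← hqd, had, hbd]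
        field_simp
        ring
      have hc0 : 0 < c := dotp_pos' (hP s) (hX s)
      have hZmem : Z ∈ Rplus (Fin m) := by
        constructor
        · intro i
          have h1 := (hX t).1 i
          have h2 := (hX t').1 i
          have : (0:ℝ) ≤ a * X t i + b * X t' i :=
            add_nonneg (mul_nonneg ha h1) (mul_nonneg hb h2)
          simpa [hZd] using this
        · intro h0
          rw [h0] at hZdot
          simp [dotp] at hZdot
          linarith
      have hconc := hu.concave (X t) (hX t) (X t') (hX t') a b ha hb hab
      have hZle : u Z ≤ U s := hmax s Z hZmem (le_of_eq hZdot)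
      have key : a * U t + b * U t' ≤ U s := le_trans hconc (hZd ▸ hZle)
      have key2 : (c - q) * U t + (p - c) * U t' ≤ (p - q) * U s := by
        have h3 := mul_le_mul_of_nonneg_right key hpq.le
        calc (c - q) * U t + (p - c) * U t'
            = (a * U t + b * U t') * (p - q) := by
              rw [had, hbd]; field_simp
          _ ≤ U s * (p - q) := h3
          _ = (p - q) * U s := mul_comm _ _
      rw [div_le_div_iff₀ (by linarith) (by linarith)]
      nlinarith [key2]
    -- construct the multipliers
    have main : ∀ s : Fin T, ∃ l : ℝ, 0 < l ∧
        ∀ t, U t ≤ U s + l * (dotp (P s) (X t) - dotp (P s) (X s)) := by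
      intro s
      have hgpos : ∀ t, dotp (P s) (X t) < dotp (P s) (X s) →
          0 < (U s - U t) / (dotp (P s) (X s) - dotp (P s) (X t)) := by
        intro t hDt
        exact div_pos (by linarith [hstrict t s hDt]) (by linarith)
      by_cases hUne : (Finset.univ.filter
          (fun t => dotp (P s) (X t) < dotp (P s) (X s))).Nonempty
      · refine ⟨(Finset.univ.filter (fun t => dotp (P s) (X t) < dotp (P s) (X s))).inf' hUne
          (fun t => (U s - U t) / (dotp (P s) (X s) - dotp (P s) (X t))), ?_, ?_⟩
        · refine (Finset.lt_inf'_iff hUne).mpr fun t ht => ?_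
          simp only [Finset.mem_filter, Finset.mem_univ, true_and] at ht
          exact hgpos t ht
        intro t
        rcases lt_trichotomy (dotp (P s) (X t)) (dotp (P s) (X s)) with hD | hD | hD
        · -- strictly inside the budget set : use the upper bound
          have ht : t ∈ Finset.univ.filter
              (fun t => dotp (P s) (X t) < dotp (P s) (X s)) := by
            simp only [Finset.mem_filter, Finset.mem_univ, true_and]; exact hD
          have h1 := Finset.inf'_le
            (fun t => (U s - U t) / (dotp (P s) (X s) - dotp (P s) (X t))) ht
          have h2 := mul_le_mul_of_nonneg_right h1
            (by linarith : (0:ℝ) ≤ dotp (P s) (X s) - dotp (P s) (X t))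
          rw [div_mul_cancel₀ _
            (by linarith : dotp (P s) (X s) - dotp (P s) (X t) ≠ 0)] at h2
          nlinarith [h2]
        · have h := hbudget t s hD.le
          rw [hD, sub_self, mul_zero, add_zero]
          exact h
        · -- strictly outside : use the cross inequality and le_inf'
          have h1 : (U t - U s) / (dotp (P s) (X t) - dotp (P s) (X s)) ≤
              (Finset.univ.filter (fun t => dotp (P s) (X t) < dotp (P s) (X s))).inf' hUne
                (fun t => (U s - U t) / (dotp (P s) (X s) - dotp (P s) (X t))) := by
            refine Finset.le_inf' hUne _ fun t' ht' => ?_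
            simp only [Finset.mem_filter, Finset.mem_univ, true_and] at ht'
            exact hcross s t t' hD ht'
          have h2 := mul_le_mul_of_nonneg_right h1
            (by linarith : (0:ℝ) ≤ dotp (P s) (X t) - dotp (P s) (X s))
          rw [div_mul_cancel₀ _
            (by linarith : dotp (P s) (X t) - dotp (P s) (X s) ≠ 0)] at h2
          nlinarith [h2]
      · -- every observation is on or outside the budget hyperplane
        have hDnn : ∀ t, dotp (P s) (X s) ≤ dotp (P s) (X t) := by
          intro t
          by_contra hc
          push_neg at hc
          exact hUne ⟨t, by
            simp only [Finset.mem_filter, Finset.mem_univ, true_and]; exact hc⟩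
        by_cases hLne : (Finset.univ.filter
            (fun t => dotp (P s) (X s) < dotp (P s) (X t))).Nonempty
        · refine ⟨max 1 ((Finset.univ.filter
            (fun t => dotp (P s) (X s) < dotp (P s) (X t))).sup' hLne
            (fun t => (U t - U s) / (dotp (P s) (X t) - dotp (P s) (X s)))),
            lt_of_lt_of_le one_pos (le_max_left _ _), ?_⟩
          intro t
          rcases eq_or_lt_of_le (hDnn t) with hD | hD
          · have h := hbudget t s hD.ge
            rw [← hD, sub_self, mul_zero, add_zero]
            exact h
          · have ht : t ∈ Finset.univ.filter
                (fun t => dotp (P s) (X s) < dotp (P s) (X t)) := by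
              simp only [Finset.mem_filter, Finset.mem_univ, true_and]; exact hD
            have h1 : (U t - U s) / (dotp (P s) (X t) - dotp (P s) (X s)) ≤
                max 1 ((Finset.univ.filter
                  (fun t => dotp (P s) (X s) < dotp (P s) (X t))).sup' hLne
                  (fun t => (U t - U s) / (dotp (P s) (X t) - dotp (P s) (X s)))) :=
              le_trans (Finset.le_sup'
                (fun t => (U t - U s) / (dotp (P s) (X t) - dotp (P s) (X s))) ht)
                (le_max_right _ _)
            have h2 := mul_le_mul_of_nonneg_right h1
              (by linarith : (0:ℝ) ≤ dotp (P s) (X t) - dotp (P s) (X s))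
            rw [div_mul_cancel₀ _
              (by linarith : dotp (P s) (X t) - dotp (P s) (X s) ≠ 0)] at h2
            nlinarith [h2]
        · refine ⟨1, one_pos, fun t => ?_⟩
          have hD : dotp (P s) (X t) = dotp (P s) (X s) := by
            rcases eq_or_lt_of_le (hDnn t) with h | h
            · exact h.symm
            · exact absurd ⟨t, by
                simp only [Finset.mem_filter, Finset.mem_univ, true_and]; exact h⟩ hLne
          have h := hbudget t s hD.le
          rw [hD, sub_self, mul_zero, add_zero]
          exact h
    choose lam hlam1 hlam2 using main
    exact ⟨U, lam, hlam1, fun t s => hlam2 s t⟩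
  · -- Backward direction
    rintro ⟨U, lam, hlam, hAf⟩
    rcases Nat.eq_zero_or_pos T with hT | hT
    · -- T = 0 : any admissible utility works
      subst hT
      refine ⟨fun Y => 1 + ∑ i, Y i, ?_, fun t => t.elim0⟩
      constructor
      · intro Y hY
        have : 0 ≤ ∑ i, Y i := Finset.sum_nonneg fun i _ => hY.1 i
        linarith
      · exact (continuous_const.add (continuous_finset_sum _
          fun i _ => continuous_apply i)).continuousOn
      · intro Y hY Z hZ a b ha hb hab
        have h1 : ∑ i, (a • Y + b • Z) i = a * ∑ i, Y i + b * ∑ i, Z i := by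
          simp only [Pi.add_apply, Pi.smul_apply, smul_eq_mul, Finset.sum_add_distrib,
            Finset.mul_sum]
        rw [h1]
        nlinarith [hab]
      · intro Y hY Z hZ hYZ
        have : ∑ i, Y i ≤ ∑ i, Z i := Finset.sum_le_sum fun i _ => hYZ i
        linarith
      · intro Y hY
        have hY' : Y ∈ Rplus (Fin m) := interior_subset hY
        have : 0 ≤ ∑ i, Y i := Finset.sum_nonneg fun i _ => hY'.1 i
        linarith
      · intro Y hY ε hε
        obtain ⟨i0, hi0⟩ := Rplus.exists_pos' hY
        refine ⟨fun i => Y i + ε / 2, ⟨?_, ?_⟩, ?_, ?_⟩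
        · intro i
          have := hY.1 i
          simp only
          linarith
        · intro h0
          have := congrFun h0 i0
          simp only [Pi.zero_apply] at this
          linarith
        · rw [dist_pi_lt_iff hε]
          intro i
          rw [Real.dist_eq]
          rw [show Y i + ε / 2 - Y i = ε / 2 from by ring, abs_of_pos (by linarith)]
          linarith
        · have : ∑ i, Y i < ∑ i, (Y i + ε / 2) :=
            Finset.sum_lt_sum_of_nonempty ⟨i0, Finset.mem_univ i0⟩
              fun i _ => by linarith
          linarith
    · -- T > 0 : Afriat's piecewise-linear utility
      have hne : (Finset.univ : Finset (Fin T)).Nonempty := ⟨⟨0, hT⟩, Finset.mem_univ _⟩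
      set C : ℝ := 1 + Finset.univ.sup' hne (fun t => lam t * dotp (P t) (X t) - U t) with hCd
      set A : Fin T → ℝ := fun t => U t + C - lam t * dotp (P t) (X t) with hAd
      have hA1 : ∀ t, 1 ≤ A t := by
        intro t
        have := Finset.le_sup' (fun t => lam t * dotp (P t) (X t) - U t) (Finset.mem_univ t)
        rw [hAd, hCd]
        simp only
        linarith
      set u : (Fin m → ℝ) → ℝ :=
        fun Y => Finset.univ.inf' hne (fun t => A t + lam t * dotp (P t) Y) with hud
      have hu_le : ∀ (Y : Fin m → ℝ) (t : Fin T), u Y ≤ A t + lam t * dotp (P t) Y :=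
        fun Y t => Finset.inf'_le _ (Finset.mem_univ t)
      have hu_ge : ∀ (Y : Fin m → ℝ) (r : ℝ),
          (∀ t, r ≤ A t + lam t * dotp (P t) Y) → r ≤ u Y :=
        fun Y r h => Finset.le_inf' hne _ fun t _ => h t
      have hu_pos : ∀ Y, 0 ≤ Y → 1 ≤ u Y := by
        intro Y hY
        refine hu_ge Y 1 fun t => ?_
        have h1 := hA1 t
        have h2 : 0 ≤ dotp (P t) Y := dotp_nonneg' (fun i => (hP t i).le) hY
        nlinarith [(hlam t)]
      have huX : ∀ t, u (X t) = U t + C := by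
        intro t
        refine le_antisymm ?_ ?_
        · have := hu_le (X t) t
          rw [hAd] at this
          simp only at this
          linarith
        · refine hu_ge (X t) _ fun s => ?_
          have := hAf t s
          rw [hAd]
          simp only
          nlinarith [this]
      refine ⟨u, ?_, ?_⟩
      · constructor
        · intro Y hY
          linarith [hu_pos Y hY.1]
        · refine Continuous.continuousOn ?_
          exact Continuous.finset_inf'_apply hne fun t _ =>
            continuous_const.add (continuous_const.mul (dotp_continuous' (P t)))
        · intro Y hY Z hZ a b ha hb hab
          refine hu_ge _ _ fun t => ?_
          have h1 : a * u Y ≤ a * (A t + lam t * dotp (P t) Y) :=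
            mul_le_mul_of_nonneg_left (hu_le Y t) ha
          have h2 : b * u Z ≤ b * (A t + lam t * dotp (P t) Z) :=
            mul_le_mul_of_nonneg_left (hu_le Z t) hb
          rw [dotp_comb']
          have h3 : a * A t + b * A t = A t := by rw [← add_mul, hab, one_mul]
          have h4 : a * (lam t * dotp (P t) Y) = lam t * (a * dotp (P t) Y) := by ring
          have h5 : b * (lam t * dotp (P t) Z) = lam t * (b * dotp (P t) Z) := by ring
          rw [mul_add] at *
          linarith [h1, h2, h3, h4, h5]
        · intro Y hY Z hZ hYZ
          refine hu_ge _ _ fun t => ?_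
          have h1 := hu_le Y t
          have h2 : dotp (P t) Y ≤ dotp (P t) Z := dotp_mono' (fun i => (hP t i).le) hYZ
          nlinarith [hlam t]
        · intro Y hY
          have hY' : Y ∈ Rplus (Fin m) := interior_subset hY
          linarith [hu_pos Y hY'.1]
        · intro Y hY ε hε
          obtain ⟨i0, hi0⟩ := Rplus.exists_pos' hY
          set Z : Fin m → ℝ := fun i => Y i + ε / 2 with hZd
          have hZmem : Z ∈ Rplus (Fin m) := by
            constructor
            · intro i
              have := hY.1 i
              simp only [hZd]
              linarith
            · intro h0
              have := congrFun h0 i0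
              simp only [hZd, Pi.zero_apply] at this
              linarith
          refine ⟨Z, hZmem, ?_, ?_⟩
          · rw [dist_pi_lt_iff hε]
            intro i
            rw [Real.dist_eq, hZd]
            simp only
            rw [show Y i + ε / 2 - Y i = ε / 2 from by ring, abs_of_pos (by linarith)]
            linarith
          · obtain ⟨t0, _, ht0⟩ := Finset.exists_mem_eq_inf' hne
              (fun t => A t + lam t * dotp (P t) Z)
            have hsum : 0 < ∑ i, P t0 i :=
              Finset.sum_pos (fun i _ => hP t0 i) ⟨i0, Finset.mem_univ i0⟩
            have hZdot : dotp (P t0) Z = dotp (P t0) Y + (ε / 2) * ∑ i, P t0 i := by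
              rw [hZd]; exact dotp_shift' (P t0) Y (ε / 2)
            have h1 := hu_le Y t0
            have h2 : u Z = A t0 + lam t0 * dotp (P t0) Z := ht0
            have h3 : 0 < lam t0 * ((ε / 2) * ∑ i, P t0 i) :=
              mul_pos (hlam t0) (mul_pos (by linarith) hsum)
            calc u Y ≤ A t0 + lam t0 * dotp (P t0) Y := h1
              _ < A t0 + lam t0 * (dotp (P t0) Y + ε / 2 * ∑ i, P t0 i) := by
                  rw [mul_add]; linarith [h3]
              _ = u Z := by rw [h2, hZdot]
      · intro t Y hY hbud
        have h1 := hu_le Y t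
        have h2 : lam t * dotp (P t) Y ≤ lam t * dotp (P t) (X t) :=
          mul_le_mul_of_nonneg_left hbud (hlam t).le
        rw [huX t, hAd] at *
        simp only at h1 ⊢
        linarith
end
end

section
/- For a trade statistics {(P^t, X^t)}_{t=1}^T, there exist real numbers U^1,…,U^T and positive real numbers λ^1,…,λ^T satisfying the Afriat inequalities U^t ≤ U^s + λ^s(⟨P^s, X^t⟩ − ⟨P^s, X^s⟩) for all t, s ∈ {1,…,T} if and only if the trade statistics satisfies GARP. -/
open scoped BigOperators

noncomputable section

/-- GARP: whenever a revealed-preference chain leads from `t` to `s`,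
`⟨P^s, X^s⟩ ≤ ⟨P^s, X^t⟩`. -/
def GARP {ι : Type*} [Fintype ι] {T : ℕ} (P X : Fin T → ι → ℝ) : Prop :=
  ∀ t s : Fin T,
    Relation.TransGen (fun a b => dotp (P a) (X b) ≤ dotp (P a) (X a)) t s →
    dotp (P s) (X s) ≤ dotp (P s) (X t)

/-- The Afriat inequalities have a positive solution iff the trade statistics
satisfies GARP. -/
theorem afriat_iff_garp {m T : ℕ} (P X : Fin T → Fin m → ℝ)
    (hP : ∀ t i, 0 < P t i) (hX : ∀ t, X t ∈ Rplus (Fin m)) :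
    (∃ (U lam : Fin T → ℝ), (∀ t, 0 < lam t) ∧
      ∀ t s : Fin T, U t ≤ U s + lam s * (dotp (P s) (X t) - dotp (P s) (X s))) ↔
    GARP P X := by
  classical
  constructor
  · rintro ⟨U, lam, hlam, hAf⟩ t s hchain
    have key : ∀ x y : Fin T,
        Relation.TransGen (fun a b => dotp (P a) (X b) ≤ dotp (P a) (X a)) x y →
        U y ≤ U x := by
      intro x y h
      induction h with
      | single h =>
          rename_i b
          have h1 := hAf b x
          nlinarith [hlam x, mul_nonpos_of_nonneg_of_nonpos (hlam x).le
            (sub_nonpos.2 h)]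
      | tail _ h ih =>
          rename_i b c _
          have h1 := hAf c b
          nlinarith [hlam b, mul_nonpos_of_nonneg_of_nonpos (hlam b).le
            (sub_nonpos.2 h)]
    by_contra hlt
    push_neg at hlt
    have h1 := hAf t s
    have h2 := key t s hchain
    nlinarith [mul_neg_of_pos_of_neg (hlam s)
      (by linarith : dotp (P s) (X t) - dotp (P s) (X s) < 0)]
  · intro hG
    set R : Fin T → Fin T → Prop :=
      fun a b => dotp (P a) (X b) ≤ dotp (P a) (X a) with hRdef
    set a : Fin T → Fin T → ℝ :=
      fun s t => dotp (P s) (X t) - dotp (P s) (X s) with hadef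
    have hass : ∀ s, a s s = 0 := fun s => sub_self _
    -- the bound A
    set A : ℝ := 1 + ∑ s, ∑ t, |a s t| with hAdef
    have hsumnn : (0:ℝ) ≤ ∑ s, ∑ t, |a s t| :=
      Finset.sum_nonneg fun _ _ => Finset.sum_nonneg fun _ _ => abs_nonneg _
    have hApos : (0:ℝ) < A := by rw [hAdef]; linarith
    have hAbd : ∀ s t, |a s t| ≤ A := by
      intro s t
      have h1 : |a s t| ≤ ∑ t', |a s t'| :=
        Finset.single_le_sum (f := fun t' => |a s t'|)
          (fun _ _ => abs_nonneg _) (Finset.mem_univ t)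
      have h2 : (∑ t', |a s t'|) ≤ ∑ s', ∑ t', |a s' t'| :=
        Finset.single_le_sum (f := fun s' => ∑ t', |a s' t'|)
          (fun s' _ => Finset.sum_nonneg fun _ _ => abs_nonneg _) (Finset.mem_univ s)
      rw [hAdef]; linarith
    -- the bound ε
    obtain ⟨ε, hεpos, hεle⟩ : ∃ ε : ℝ, 0 < ε ∧ ∀ s t, a s t ≠ 0 → ε ≤ |a s t| := by
      by_cases h : (Finset.univ.filter
          (fun p : Fin T × Fin T => a p.1 p.2 ≠ 0)).Nonempty
      · refine ⟨(Finset.univ.filter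
            (fun p : Fin T × Fin T => a p.1 p.2 ≠ 0)).inf' h
            (fun p : Fin T × Fin T => |a p.1 p.2|), ?_, ?_⟩
        · rw [Finset.lt_inf'_iff h (f := fun p : Fin T × Fin T => |a p.1 p.2|)]
          intro p hp
          simp only [Finset.mem_filter, Finset.mem_univ, true_and] at hp
          exact abs_pos.2 hp
        · intro s t hst
          have hmem : (s, t) ∈ Finset.univ.filter
              (fun p : Fin T × Fin T => a p.1 p.2 ≠ 0) :=
            Finset.mem_filter.2 ⟨Finset.mem_univ _, hst⟩
          exact Finset.inf'_le (fun p : Fin T × Fin T => |a p.1 p.2|) hmem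
      · exact ⟨1, one_pos, fun s t hst =>
          absurd (Finset.nonempty_of_ne_empty (by
            intro he
            have : (s, t) ∈ Finset.univ.filter
                (fun p : Fin T × Fin T => a p.1 p.2 ≠ 0) := by simp [hst]
            rw [he] at this
            exact absurd this (Finset.notMem_empty _))) h⟩
    set c : ℝ := 1 + A / ε with hcdef
    have hc1 : 1 < c := by
      have : 0 < A / ε := div_pos hApos hεpos
      rw [hcdef]; linarith
    have hcm1 : c - 1 = A / ε := by rw [hcdef]; ring
    -- the rank function
    set r : Fin T → ℕ :=
      fun t => (Finset.univ.filter (fun u => Relation.ReflTransGen R t u)).card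
      with hrdef
    have hrK : ∀ t, r t ≤ T := fun t =>
      le_trans (Finset.card_filter_le _ _) (by simp)
    have hmono : ∀ s t, R s t → r t ≤ r s := by
      intro s t hst
      apply Finset.card_le_card
      intro u hu
      simp only [Finset.mem_filter, Finset.mem_univ, true_and] at hu ⊢
      exact Relation.ReflTransGen.head hst hu
    have hstrict : ∀ s t, a s t < 0 → r t < r s := by
      intro s t hst
      have hRst : R s t := by
        rw [hRdef]
        have : a s t < 0 := hst
        rw [hadef] at this
        dsimp at this ⊢
        linarith
      have hnt : ¬ Relation.ReflTransGen R t s := by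
        intro hts
        rcases Relation.ReflTransGen.cases_head hts with heq | ⟨u, htu, hus⟩
        · rw [heq] at hst
          have := hass s
          linarith
        · have htg : Relation.TransGen R t s := Relation.TransGen.head' htu hus
          have := hG t s htg
          have : (0:ℝ) ≤ a s t := by rw [hadef]; dsimp; linarith
          linarith
      apply Finset.card_lt_card
      have hsub : (Finset.univ.filter (fun u => Relation.ReflTransGen R t u)) ⊆
          (Finset.univ.filter (fun u => Relation.ReflTransGen R s u)) := by
        intro u hu
        simp only [Finset.mem_filter, Finset.mem_univ, true_and] at hu ⊢
        exact Relation.ReflTransGen.head hRst hu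
      rw [Finset.ssubset_iff_of_subset hsub]
      exact ⟨s, by simp [Relation.ReflTransGen.refl], by simpa using hnt⟩
    -- the construction
    refine ⟨fun t => -(c ^ (T - r t)), fun s => c ^ (T - r s) * (c - 1) / A,
      fun s => ?_, fun t s => ?_⟩
    · have hp : (0:ℝ) < c ^ (T - r s) := pow_pos (by linarith) _
      have : (0:ℝ) < c - 1 := by linarith
      positivity
    · have hc0 : (0:ℝ) < c := by linarith
      have hp : (0:ℝ) < c ^ (T - r s) := pow_pos hc0 _
      have hq1 : (1:ℝ) ≤ c ^ (T - r t) := one_le_pow₀ hc1.le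
      have hgoal : dotp (P s) (X t) - dotp (P s) (X s) = a s t := rfl
      rw [hgoal]
      rcases lt_trichotomy (a s t) 0 with hneg | hzero | hpos
      · -- strict edge case
        have hlt := hstrict s t hneg
        have hexp : T - r s + 1 ≤ T - r t := by have := hrK s; omega
        have h1 : c ^ (T - r s) * c ≤ c ^ (T - r t) := by
          calc c ^ (T - r s) * c = c ^ (T - r s + 1) := (pow_succ c _).symm
            _ ≤ c ^ (T - r t) := pow_le_pow_right₀ hc1.le hexp
        have h2 : -A ≤ a s t := by
          have := hAbd s t; rw [abs_of_neg hneg] at this; linarith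
        have h3 : -(c ^ (T - r t)) - (-(c ^ (T - r s))) ≤
            c ^ (T - r s) * (c - 1) * a s t / A := by
          rw [le_div_iff₀ hApos]
          nlinarith [mul_le_mul_of_nonneg_left h2
            (mul_nonneg hp.le (by linarith : (0:ℝ) ≤ c - 1))]
        have h4 : c ^ (T - r s) * (c - 1) / A * a s t =
            c ^ (T - r s) * (c - 1) * a s t / A := by ring
        linarith [h3, h4 ▸ le_refl (c ^ (T - r s) * (c - 1) / A * a s t)]
      · -- zero case
        have hRst : R s t := by
          rw [hRdef]
          have : a s t = 0 := hzero
          rw [hadef] at this; dsimp at this ⊢; linarith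
        have hle := hmono s t hRst
        have : c ^ (T - r s) ≤ c ^ (T - r t) :=
          pow_le_pow_right₀ hc1.le (by omega)
        rw [hzero]
        simp only [mul_zero, add_zero]
        linarith
      · -- positive case
        have hεa : ε ≤ a s t := by
          have := hεle s t (ne_of_gt hpos); rwa [abs_of_pos hpos] at this
        have h4 : c ^ (T - r s) ≤ c ^ (T - r s) * a s t / ε := by
          rw [le_div_iff₀ hεpos]
          nlinarith
        have h5 : c ^ (T - r s) * (c - 1) / A * a s t =
            c ^ (T - r s) * a s t / ε := by
          rw [hcm1]
          field_simp
        rw [h5]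
        linarith
end
end

section
/- For a trade statistics {(P^t, X^t)}_{t=1}^T, there exist positive real numbers λ^1,…,λ^T with λ^t⟨P^t, X^s⟩ ≥ λ^s⟨P^s, X^s⟩ for all t, s ∈ {1,…,T} if and only if the trade statistics satisfies HARP. -/
open scoped BigOperators

noncomputable section

/-- HARP: for every cyclic sequence of observations the product of cross
expenditures dominates the product of own expenditures. -/
def HARP {ι : Type*} [Fintype ι] {T : ℕ} (P X : Fin T → ι → ℝ) : Prop :=
  ∀ (k : ℕ) (τ : Fin (k + 1) → Fin T),
    (∏ i, dotp (P (τ i)) (X (τ i))) ≤ ∏ i, dotp (P (τ i)) (X (τ (i + 1)))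

lemma dotp_pos {m : ℕ} {p x : Fin m → ℝ} (hp : ∀ i, 0 < p i) (hx : x ∈ Rplus (Fin m)) :
    0 < dotp p x := by
  obtain ⟨hx0, hxne⟩ := hx
  have : ∃ j, x j ≠ 0 := by
    by_contra h
    push_neg at h
    exact hxne (funext h)
  obtain ⟨j, hj⟩ := this
  have hxj : 0 < x j := lt_of_le_of_ne (hx0 j) (Ne.symm hj)
  apply Finset.sum_pos' (fun i _ => mul_nonneg (hp i).le (hx0 i))
  exact ⟨j, Finset.mem_univ j, mul_pos (hp j) hxj⟩

section Path
variable {T : ℕ} (w : Fin T → Fin T → ℝ)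

/-- Sum of weights along a path `σ 0, σ 1, …, σ k`. -/
def Spath {k : ℕ} (σ : Fin (k+1) → Fin T) : ℝ :=
  ∑ i : Fin k, w (σ i.castSucc) (σ i.succ)

lemma Spath_cons {k : ℕ} (u : Fin T) (σ : Fin (k+1) → Fin T) :
    Spath w (Fin.cons u σ) = w u (σ 0) + Spath w σ := by
  unfold Spath
  rw [Fin.sum_univ_succ]
  congr 1

lemma cyclic_eq {k : ℕ} (τ : Fin (k+1) → Fin T) :
    ∑ i, w (τ i) (τ (i + 1)) = Spath w τ + w (τ (Fin.last k)) (τ 0) := by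
  rw [Fin.sum_univ_castSucc, Fin.last_add_one]
  congr 1
  apply Finset.sum_congr rfl
  intro i _
  rw [Fin.coeSucc_eq_succ]

/-- Bellman–Ford iteration from base vertex `z`. -/
def dBF (z : Fin T) : ℕ → Fin T → ℝ
  | 0 => fun s => w z s
  | n+1 => fun s => min (dBF z n s) (⨅ u : Fin T, (dBF z n u + w u s))

variable [NeZero T]

lemma dBF_le_succ (z : Fin T) (n : ℕ) (t s : Fin T) :
    dBF w z (n+1) s ≤ dBF w z n t + w t s := by
  refine le_trans (min_le_right _ _) ?_
  exact ciInf_le (Set.Finite.bddBelow (Set.finite_range _)) t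

lemma dBF_invariant (z : Fin T)
    (hw : ∀ (k : ℕ) (τ : Fin (k+1) → Fin T), 0 ≤ ∑ i, w (τ i) (τ (i + 1))) :
    ∀ (n : ℕ) (k : ℕ) (σ : Fin (k+1) → Fin T),
      0 ≤ dBF w z n (σ 0) + Spath w σ + w (σ (Fin.last k)) z := by
  intro n
  induction n with
  | zero =>
    intro k σ
    have h := hw (k+1) (Fin.cons z σ)
    rw [cyclic_eq] at h
    rw [Spath_cons] at h
    have hlast : (Fin.cons z σ : Fin (k+2) → Fin T) (Fin.last (k+1)) = σ (Fin.last k) := by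
      rw [← Fin.succ_last, Fin.cons_succ]
    have h0 : (Fin.cons z σ : Fin (k+2) → Fin T) 0 = z := Fin.cons_zero _ _
    rw [hlast, h0] at h
    show 0 ≤ w z (σ 0) + Spath w σ + w (σ (Fin.last k)) z
    linarith
  | succ n ih =>
    intro k σ
    show 0 ≤ min _ _ + Spath w σ + w (σ (Fin.last k)) z
    have h1 : -(Spath w σ + w (σ (Fin.last k)) z) ≤ dBF w z n (σ 0) := by
      linarith [ih k σ]
    have h2 : -(Spath w σ + w (σ (Fin.last k)) z) ≤ ⨅ u : Fin T, (dBF w z n u + w u (σ 0)) := by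
      apply le_ciInf
      intro u
      have h := ih (k+1) (Fin.cons u σ)
      rw [Spath_cons] at h
      have hlast : (Fin.cons u σ : Fin (k+2) → Fin T) (Fin.last (k+1)) = σ (Fin.last k) := by
        rw [← Fin.succ_last, Fin.cons_succ]
      have h0 : (Fin.cons u σ : Fin (k+2) → Fin T) 0 = u := Fin.cons_zero _ _
      rw [hlast, h0] at h
      linarith
    have := le_min h1 h2
    linarith

end Path

lemma exists_phi {T : ℕ} [NeZero T] (w : Fin T → Fin T → ℝ)
    (hw : ∀ (k : ℕ) (τ : Fin (k+1) → Fin T), 0 ≤ ∑ i, w (τ i) (τ (i + 1))) :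
    ∃ φ : Fin T → ℝ, ∀ t s, φ s ≤ φ t + w t s := by
  have hT : 0 < T := Nat.pos_of_ne_zero (NeZero.ne T)
  set z : Fin T := ⟨0, hT⟩ with hz
  refine ⟨fun s => ⨅ n : ℕ, dBF w z n s, ?_⟩
  have hbdd : ∀ s n, -(w s z) ≤ dBF w z n s := by
    intro s n
    have h := dBF_invariant w z hw n 0 (fun _ => s)
    have hS : Spath w (fun _ : Fin 1 => s) = 0 := by
      simp [Spath]
    rw [hS] at h
    simp only [add_zero] at h
    linarith
  have hBdd : ∀ s, BddBelow (Set.range fun n => dBF w z n s) := by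
    intro s
    exact ⟨-(w s z), by rintro x ⟨n, rfl⟩; exact hbdd s n⟩
  intro t s
  have h1 : ∀ n : ℕ, (⨅ n : ℕ, dBF w z n s) - w t s ≤ dBF w z n t := by
    intro n
    have h2 : (⨅ n : ℕ, dBF w z n s) ≤ dBF w z (n+1) s := ciInf_le (hBdd s) (n+1)
    have h3 := dBF_le_succ w z n t s
    linarith
  have := le_ciInf h1
  linarith


/-- The homothetic Afriat system has a positive solution iff the trade
statistics satisfies HARP. -/
theorem lambda_system_iff_harp {m T : ℕ} (P X : Fin T → Fin m → ℝ)
    (hP : ∀ t i, 0 < P t i) (hX : ∀ t, X t ∈ Rplus (Fin m)) :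
    (∃ lam : Fin T → ℝ, (∀ t, 0 < lam t) ∧
      ∀ t s : Fin T, lam s * dotp (P s) (X s) ≤ lam t * dotp (P t) (X s)) ↔
    HARP P X := by
  have hcross : ∀ t s, 0 < dotp (P t) (X s) := fun t s => dotp_pos (hP t) (hX s)
  constructor
  · rintro ⟨lam, hlam, hineq⟩ k τ
    have hprod : (∏ i : Fin (k+1), lam (τ (i+1)) * dotp (P (τ (i+1))) (X (τ (i+1)))) ≤
        ∏ i : Fin (k+1), lam (τ i) * dotp (P (τ i)) (X (τ (i+1))) := by
      apply Finset.prod_le_prod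
      · intro i _
        exact mul_nonneg (hlam _).le (hcross _ _).le
      · intro i _
        exact hineq (τ i) (τ (i+1))
    rw [Finset.prod_mul_distrib, Finset.prod_mul_distrib] at hprod
    have e1 : (∏ i : Fin (k+1), lam (τ (i+1))) = ∏ i : Fin (k+1), lam (τ i) :=
      Fintype.prod_equiv (Equiv.addRight 1) _ _ (fun i => rfl)
    have e2 : (∏ i : Fin (k+1), dotp (P (τ (i+1))) (X (τ (i+1)))) =
        ∏ i : Fin (k+1), dotp (P (τ i)) (X (τ i)) :=
      Fintype.prod_equiv (Equiv.addRight 1) _ _ (fun i => rfl)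
    rw [e1, e2] at hprod
    have hL : 0 < ∏ i : Fin (k+1), lam (τ i) :=
      Finset.prod_pos (fun i _ => hlam _)
    exact (mul_le_mul_iff_right₀ hL).mp hprod
  · intro hharp
    rcases Nat.eq_zero_or_pos T with hT | hT
    · subst hT
      exact ⟨fun _ => 1, fun t => t.elim0, fun t => t.elim0⟩
    · haveI : NeZero T := ⟨hT.ne'⟩
      set w : Fin T → Fin T → ℝ := fun t s =>
        Real.log (dotp (P t) (X s)) - Real.log (dotp (P s) (X s)) with hwdef
      have hw : ∀ (k : ℕ) (τ : Fin (k+1) → Fin T), 0 ≤ ∑ i, w (τ i) (τ (i + 1)) := by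
        intro k τ
        have h := hharp k τ
        have hsum : (∑ i, w (τ i) (τ (i + 1))) =
            Real.log (∏ i, dotp (P (τ i)) (X (τ (i+1)))) -
            Real.log (∏ i, dotp (P (τ i)) (X (τ i))) := by
          rw [Real.log_prod (fun i _ => (hcross _ _).ne'),
            Real.log_prod (fun i _ => (hcross _ _).ne'), hwdef]
          rw [Finset.sum_sub_distrib]
          congr 1
          exact Fintype.sum_equiv (Equiv.addRight 1)
            (fun i => Real.log (dotp (P (τ (i+1))) (X (τ (i+1)))))
            (fun i => Real.log (dotp (P (τ i)) (X (τ i)))) (fun i => rfl)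
        rw [hsum, sub_nonneg]
        exact Real.log_le_log (Finset.prod_pos (fun i _ => hcross _ _)) h
      obtain ⟨φ, hφ⟩ := exists_phi w hw
      refine ⟨fun s => Real.exp (φ s), fun t => Real.exp_pos _, ?_⟩
      intro t s
      have h := hφ t s
      rw [hwdef] at h
      simp only at h
      calc Real.exp (φ s) * dotp (P s) (X s)
          = Real.exp (φ s + Real.log (dotp (P s) (X s))) := by
            rw [Real.exp_add, Real.exp_log (hcross s s)]
        _ ≤ Real.exp (φ t + Real.log (dotp (P t) (X s))) := by
            apply Real.exp_le_exp.mpr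
            linarith
        _ = Real.exp (φ t) * dotp (P t) (X s) := by
            rw [Real.exp_add, Real.exp_log (hcross t s)]
end
end

section
/- Let {(P^t, X^t)}_{t=1}^T be a trade statistics, let C_{ts} = ⟨P^s, X^s⟩ / ⟨P^t, X^s⟩ for t, s ∈ {1,…,T}, and let C*_{ts} = max{ C_{t t_1} C_{t_1 t_2} ⋯ C_{t_k s} : t_1,…,t_k ∈ {1,…,T}, k ≥ 0 } (the empty chain k = 0 giving C_{ts}), where the maximum is taken over chains of length at most T. Then the trade statistics satisfies HARP if and only if C*_{tt} ≤ 1 for all t ∈ {1,…,T}. -/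
open scoped BigOperators

noncomputable section

/-- `chainVal C t s [t₁,…,t_k] = C t t₁ * C t₁ t₂ * ⋯ * C t_k s`. -/
def chainVal {T : ℕ} (C : Fin T → Fin T → ℝ) : Fin T → Fin T → List (Fin T) → ℝ
  | t, s, [] => C t s
  | t, s, a :: l => C t a * chainVal C a s l

namespace HarpAux

variable {T : ℕ} {C : Fin T → Fin T → ℝ}

lemma chainVal_pos (hpos : ∀ a b, 0 < C a b) : ∀ (l : List (Fin T)) (t s), 0 < chainVal C t s l
  | [], t, s => hpos t s
  | a :: l, t, s => mul_pos (hpos t a) (chainVal_pos hpos l a s)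

lemma chainVal_append (a s : Fin T) : ∀ (l1 : List (Fin T)) (t : Fin T) (l2 : List (Fin T)),
    chainVal C t s (l1 ++ a :: l2) = chainVal C t a l1 * chainVal C a s l2
  | [], t, l2 => rfl
  | b :: l1, t, l2 => by
      show C t b * chainVal C b s (l1 ++ a :: l2) = C t b * chainVal C b a l1 * chainVal C a s l2
      rw [chainVal_append a s l1 b l2, mul_assoc]

lemma exists_dup {α : Type*} : ∀ (l : List α), ¬ l.Nodup →
    ∃ (a : α) (l1 l2 l3 : List α), l = l1 ++ a :: (l2 ++ a :: l3)
  | [], h => absurd List.nodup_nil h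
  | b :: l, h => by
      by_cases hb : b ∈ l
      · obtain ⟨l2, l3, rfl⟩ := List.append_of_mem hb
        exact ⟨b, [], l2, l3, rfl⟩
      · have hnd : ¬ l.Nodup := fun hn => h (List.nodup_cons.2 ⟨hb, hn⟩)
        obtain ⟨a, l1, l2, l3, rfl⟩ := exists_dup l hnd
        exact ⟨a, b :: l1, l2, l3, rfl⟩

lemma cyc_le_one (hpos : ∀ a b, 0 < C a b)
    (base : ∀ (t : Fin T) (l : List (Fin T)), l.length ≤ T → chainVal C t t l ≤ 1) :
    ∀ (n : ℕ) (l : List (Fin T)), l.length ≤ n → ∀ t, chainVal C t t l ≤ 1 := by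
  intro n
  induction n with
  | zero =>
      intro l hl t
      exact base t l (hl.trans (Nat.zero_le T))
  | succ n ih =>
      intro l hl t
      by_cases hT : l.length ≤ T
      · exact base t l hT
      · push_neg at hT
        have hcard : ¬ (t :: l).Nodup := by
          intro hn
          have := hn.length_le_card
          simp only [List.length_cons, Fintype.card_fin] at this
          omega
        obtain ⟨a, l1, l2, l3, hdec⟩ := exists_dup _ hcard
        cases l1 with
        | nil =>
            simp only [List.nil_append, List.cons.injEq] at hdec
            obtain ⟨rfl, rfl⟩ := hdec
            have hlen : l2.length ≤ n ∧ l3.length ≤ n := by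
              simp only [List.length_append, List.length_cons] at hl; omega
            rw [chainVal_append]
            calc chainVal C t t l2 * chainVal C t t l3 ≤ 1 * 1 :=
                  mul_le_mul (ih l2 hlen.1 t) (ih l3 hlen.2 t)
                    (chainVal_pos hpos l3 t t).le zero_le_one
              _ = 1 := mul_one 1
        | cons b l1 =>
            simp only [List.cons_append, List.cons.injEq] at hdec
            obtain ⟨rfl, rfl⟩ := hdec
            have hlen : l2.length ≤ n ∧ l1.length + l3.length + 1 ≤ n := by
              simp only [List.length_append, List.length_cons] at hl; omega
            rw [chainVal_append, chainVal_append]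
            have hre : chainVal C t a l1 * (chainVal C a a l2 * chainVal C a t l3)
                = chainVal C a a l2 * chainVal C t t (l1 ++ a :: l3) := by
              rw [chainVal_append]; ring
            rw [hre]
            have h3 := ih (l1 ++ a :: l3)
              (by simp only [List.length_append, List.length_cons]; omega) t
            calc chainVal C a a l2 * chainVal C t t (l1 ++ a :: l3) ≤ 1 * 1 :=
                  mul_le_mul (ih l2 hlen.1 a) h3 (chainVal_pos hpos _ t t).le zero_le_one
              _ = 1 := mul_one 1

lemma chainVal_ofFn (k : ℕ) (g : Fin k → Fin T) (t s : Fin T) :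
    chainVal C t s (List.ofFn g) =
      (∏ i : Fin k, C ((Fin.cons t g : Fin (k+1) → Fin T) i.castSucc)
          ((Fin.cons t g : Fin (k+1) → Fin T) i.succ))
        * C ((Fin.cons t g : Fin (k+1) → Fin T) (Fin.last k)) s := by
  induction k generalizing t with
  | zero =>
      simp [chainVal, show (Fin.last 0) = 0 from rfl]
  | succ k ih =>
      rw [List.ofFn_succ]
      show C t (g 0) * chainVal C (g 0) s (List.ofFn (Fin.tail g)) = _
      rw [ih (Fin.tail g) (g 0)]
      have hg : Fin.cons (g 0) (Fin.tail g) = g := Fin.cons_self_tail g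
      rw [hg]
      simp only [Fin.prod_univ_succ, ← Fin.succ_castSucc, ← Fin.succ_last, Fin.cons_succ,
        Fin.castSucc_zero, Fin.cons_zero]
      ring

lemma chainVal_cycle (k : ℕ) (τ : Fin (k+1) → Fin T) :
    chainVal C (τ 0) (τ 0) (List.ofFn fun i : Fin k => τ i.succ)
      = ∏ i, C (τ i) (τ (i + 1)) := by
  rw [chainVal_ofFn]
  have hτ : Fin.cons (τ 0) (fun i : Fin k => τ i.succ) = τ := Fin.cons_self_tail τ
  rw [hτ, Fin.prod_univ_castSucc (fun i : Fin (k+1) => C (τ i) (τ (i + 1)))]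
  congr 1
  · exact Finset.prod_congr rfl fun i _ => by rw [Fin.coeSucc_eq_succ]
  · rw [Fin.last_add_one]

end HarpAux

/-- A trade statistics satisfies HARP iff all diagonal elements of the
idempotent closure `C*` of the Paasche index matrix are at most 1. -/
theorem harp_iff_cstar_diag_le_one {m T : ℕ} (P X : Fin T → Fin m → ℝ)
    (hP : ∀ t i, 0 < P t i) (hX : ∀ t, X t ∈ Rplus (Fin m))
    (C : Fin T → Fin T → ℝ)
    (hC : ∀ t s, C t s = dotp (P s) (X s) / dotp (P t) (X s))
    (Cstar : Fin T → Fin T → ℝ)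
    (hCstar : ∀ t s, Cstar t s =
      sSup {r | ∃ l : List (Fin T), l.length ≤ T ∧ r = chainVal C t s l}) :
    HARP P X ↔ ∀ t, Cstar t t ≤ 1 := by
  classical
  have hdpos : ∀ t s : Fin T, 0 < dotp (P t) (X s) := by
    intro t s
    obtain ⟨hx0, hxne⟩ := hX s
    have hx0' : ∀ j, 0 ≤ X s j := fun j => hx0 j
    have hj : ∃ j, 0 < X s j := by
      by_contra hcon
      push_neg at hcon
      exact hxne (funext fun j => le_antisymm (hcon j) (hx0' j))
    obtain ⟨j, hj⟩ := hj
    exact Finset.sum_pos' (fun i _ => mul_nonneg (hP t i).le (hx0' i))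
      ⟨j, Finset.mem_univ j, mul_pos (hP t j) hj⟩
  have hCpos : ∀ a b, 0 < C a b := fun a b => by
    rw [hC]; exact div_pos (hdpos b b) (hdpos a b)
  have hprod : ∀ (k : ℕ) (τ : Fin (k+1) → Fin T),
      (∏ i, C (τ i) (τ (i+1)))
        = (∏ i, dotp (P (τ i)) (X (τ i))) / (∏ i, dotp (P (τ i)) (X (τ (i+1)))) := by
    intro k τ
    have h1 : (∏ i, dotp (P (τ (i+1))) (X (τ (i+1)))) = ∏ i, dotp (P (τ i)) (X (τ i)) :=
      Fintype.prod_equiv (Equiv.addRight (1 : Fin (k+1))) _ _ (fun i => rfl)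
    rw [← h1, ← Finset.prod_div_distrib]
    exact Finset.prod_congr rfl fun i _ => hC _ _
  have hkey : ∀ (k : ℕ) (τ : Fin (k+1) → Fin T),
      (∏ i, C (τ i) (τ (i+1))) ≤ 1 ↔
        (∏ i, dotp (P (τ i)) (X (τ i))) ≤ ∏ i, dotp (P (τ i)) (X (τ (i+1))) := by
    intro k τ
    rw [hprod, div_le_one (Finset.prod_pos fun i _ => hdpos _ _)]
  constructor
  · intro hH t
    rw [hCstar]
    apply Real.sSup_le _ zero_le_one
    rintro r ⟨l, hl, rfl⟩
    set τ : Fin (l.length + 1) → Fin T := Fin.cons t l.get with hτ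
    have h0 : τ 0 = t := Fin.cons_zero _ _
    have hofn : (List.ofFn fun i : Fin l.length => τ i.succ) = l := by
      simp only [hτ, Fin.cons_succ]
      exact List.ofFn_get l
    calc chainVal C t t l = ∏ i, C (τ i) (τ (i+1)) := by
          rw [← HarpAux.chainVal_cycle l.length τ, hofn, h0]
      _ ≤ 1 := (hkey _ _).2 (hH _ _)
  · intro h k τ
    have base : ∀ (t : Fin T) (l : List (Fin T)), l.length ≤ T → chainVal C t t l ≤ 1 := by
      intro t l hl
      have hfin : {r | ∃ l : List (Fin T), l.length ≤ T ∧ r = chainVal C t t l}.Finite := by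
        refine ((List.finite_length_le (Fin T) T).image (fun l => chainVal C t t l)).subset ?_
        rintro r ⟨l', hl', rfl⟩
        exact ⟨l', hl', rfl⟩
      have hle := le_csSup hfin.bddAbove (⟨l, hl, rfl⟩ :
        chainVal C t t l ∈ {r | ∃ l : List (Fin T), l.length ≤ T ∧ r = chainVal C t t l})
      rw [← hCstar] at hle
      exact hle.trans (h t)
    refine (hkey k τ).1 ?_
    rw [← HarpAux.chainVal_cycle k τ]
    exact HarpAux.cyc_le_one hCpos base _ _ le_rfl (τ 0)
end
end

section
/- Let {(P^t, X^t)}_{t=1}^T be a trade statistics satisfying HARP, let C_{ts} = ⟨P^s, X^s⟩ / ⟨P^t, X^s⟩, and let C*_{ts} = max{ C_{t t_1} C_{t_1 t_2} ⋯ C_{t_k s} : t_1,…,t_k ∈ {1,…,T}, k ≥ 0 } (the empty chain giving C_{ts}), the maximum being over chains of length at most T. Then the numbers λ^t = max{ C*_{tτ} : τ ∈ {1,…,T} } are positive and satisfy λ^t⟨P^t, X^s⟩ ≥ λ^s⟨P^s, X^s⟩ for all t, s ∈ {1,…,T}. -/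
open scoped BigOperators

noncomputable section

set_option linter.unnecessarySimpa false

lemma chainVal_append {T : ℕ} (C : Fin T → Fin T → ℝ) (a s : Fin T) (l1 l2 : List (Fin T)) :
    ∀ t, chainVal C t s (l1 ++ a :: l2) = chainVal C t a l1 * chainVal C a s l2 := by
  induction l1 with
  | nil => intro t; simp [chainVal]
  | cons b l ih => intro t; simp [chainVal, ih, mul_assoc]

lemma chainVal_pos {T : ℕ} {C : Fin T → Fin T → ℝ} (hC : ∀ t s, 0 < C t s) (s : Fin T)
    (l : List (Fin T)) : ∀ t, 0 < chainVal C t s l := by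
  induction l with
  | nil => exact fun t => hC t s
  | cons b l ih => exact fun t => mul_pos (hC t b) (ih b)

lemma exists_dup_decomp {α : Type*} {l : List α} (h : ¬ l.Nodup) :
    ∃ (a : α) (l1 l2 l3 : List α), l = l1 ++ a :: (l2 ++ a :: l3) := by
  induction l with
  | nil => simp at h
  | cons b l ih =>
    by_cases hb : b ∈ l
    · obtain ⟨s, t, rfl⟩ := List.append_of_mem hb
      exact ⟨b, [], s, t, by simp⟩
    · have hnl : ¬ l.Nodup := by
        rw [List.nodup_cons] at h; tauto
      obtain ⟨a, l1, l2, l3, rfl⟩ := ih hnl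
      exact ⟨a, b :: l1, l2, l3, by simp⟩

lemma chainVal_eq_prod {T : ℕ} (C : Fin T → Fin T → ℝ) :
    ∀ (l : List (Fin T)) (t s : Fin T),
      chainVal C t s l = ∏ i : Fin (l.length + 1),
        C ((t :: l)[(i : ℕ)]'(by simpa using i.isLt))
          ((l ++ [s])[(i : ℕ)]'(by simpa using i.isLt)) := by
  intro l
  induction l with
  | nil => intro t s; simp [chainVal]
  | cons b l ih =>
    intro t s
    rw [Fin.prod_univ_succ, chainVal, ih b s]
    simp [List.getElem_cons_succ]

lemma cycle_le_one {m T : ℕ} (P X : Fin T → Fin m → ℝ)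
    (hHARP : HARP P X) (C : Fin T → Fin T → ℝ)
    (hC : ∀ t s, C t s = dotp (P s) (X s) / dotp (P t) (X s))
    (hd : ∀ t s, 0 < dotp (P t) (X s))
    (a : Fin T) (l : List (Fin T)) : chainVal C a a l ≤ 1 := by
  set k := l.length with hk
  set τ : Fin (k + 1) → Fin T := fun i => (a :: l)[(i : ℕ)]'(by simpa using i.isLt) with hτ
  have hshift : ∀ i : Fin (k + 1), (l ++ [a])[(i : ℕ)]'(by simpa using i.isLt) = τ (i + 1) := by
    intro i
    rcases eq_or_lt_of_le (Nat.lt_succ_iff.mp i.isLt) with he | hlt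
    · have hi : i = Fin.last k := Fin.ext (by simpa using he)
      subst hi
      have h1 : (Fin.last k) + 1 = 0 := by
        ext; simp [Fin.add_def]
      rw [h1]
      simp [hτ, List.getElem_concat_length]
      exact List.getElem_concat_length hk _
    · have hv : ((i + 1 : Fin (k + 1)) : ℕ) = (i : ℕ) + 1 := by
        simp [Fin.add_def, Nat.mod_eq_of_lt (Nat.succ_lt_succ hlt)]
      simp only [hτ, hv]
      rw [List.getElem_append_left hlt]
      simp
  have key : chainVal C a a l = ∏ i : Fin (k + 1), C (τ i) (τ (i + 1)) := by
    rw [chainVal_eq_prod C l a a]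
    exact Finset.prod_congr rfl fun i _ => by rw [hshift i]
  have hE : ∏ i : Fin (k + 1), dotp (P (τ (i + 1))) (X (τ (i + 1)))
      = ∏ i : Fin (k + 1), dotp (P (τ i)) (X (τ i)) :=
    Equiv.prod_comp (Equiv.addRight (1 : Fin (k + 1))) fun j => dotp (P (τ j)) (X (τ j))
  have hsplit : ∏ i : Fin (k + 1), C (τ i) (τ (i + 1))
      = (∏ i : Fin (k + 1), dotp (P (τ (i + 1))) (X (τ (i + 1))))
        / ∏ i : Fin (k + 1), dotp (P (τ i)) (X (τ (i + 1))) := by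
    rw [← Finset.prod_div_distrib]
    exact Finset.prod_congr rfl fun i _ => hC _ _
  rw [key, hsplit, hE, div_le_one (Finset.prod_pos fun i _ => hd _ _)]
  exact hHARP k τ

/-- If a trade statistics satisfies HARP, then `λ^t = max_τ C*_{tτ}` is a
positive solution of the homothetic Afriat system. -/
theorem cstar_gives_lambda_solution {m T : ℕ} (P X : Fin T → Fin m → ℝ)
    (hP : ∀ t i, 0 < P t i) (hX : ∀ t, X t ∈ Rplus (Fin m))
    (hHARP : HARP P X)
    (C : Fin T → Fin T → ℝ)
    (hC : ∀ t s, C t s = dotp (P s) (X s) / dotp (P t) (X s))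
    (Cstar : Fin T → Fin T → ℝ)
    (hCstar : ∀ t s, Cstar t s =
      sSup {r | ∃ l : List (Fin T), l.length ≤ T ∧ r = chainVal C t s l})
    (lam : Fin T → ℝ) (hlamdef : ∀ t, lam t = ⨆ τ : Fin T, Cstar t τ) :
    (∀ t, 0 < lam t) ∧
    (∀ t s : Fin T, lam s * dotp (P s) (X s) ≤ lam t * dotp (P t) (X s)) := by
  -- positivity of scalar products
  have hd : ∀ t s : Fin T, 0 < dotp (P t) (X s) := by
    intro t s
    obtain ⟨hX0, hXne⟩ := hX s
    obtain ⟨i, hi⟩ := Function.ne_iff.mp hXne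
    have hXi : 0 < X s i := lt_of_le_of_ne (hX0 i) (by simpa [eq_comm] using hi)
    exact Finset.sum_pos' (fun j _ => mul_nonneg (hP t j).le (hX0 j))
      ⟨i, Finset.mem_univ i, mul_pos (hP t i) hXi⟩
  have hCpos : ∀ t s, 0 < C t s := fun t s => by
    rw [hC]; exact div_pos (hd s s) (hd t s)
  have hcyc : ∀ (a : Fin T) (l : List (Fin T)), chainVal C a a l ≤ 1 :=
    fun a l => cycle_le_one P X hHARP C hC hd a l
  -- the sets defining Cstar
  have hne : ∀ t s : Fin T,
      ({r | ∃ l : List (Fin T), l.length ≤ T ∧ r = chainVal C t s l}).Nonempty :=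
    fun t s => ⟨chainVal C t s [], [], Nat.zero_le T, rfl⟩
  have hbdd : ∀ t s : Fin T,
      BddAbove {r | ∃ l : List (Fin T), l.length ≤ T ∧ r = chainVal C t s l} := by
    intro t s
    have heq : {r | ∃ l : List (Fin T), l.length ≤ T ∧ r = chainVal C t s l}
        = (fun l => chainVal C t s l) '' {l | l.length ≤ T} := by
      ext r; simp [Set.mem_image, eq_comm]
    rw [heq]
    exact (List.finite_length_le (Fin T) T).image _ |>.bddAbove
  -- every chain value is at most Cstar
  have main : ∀ (n : ℕ) (l : List (Fin T)), l.length ≤ n →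
      ∀ t s, chainVal C t s l ≤ Cstar t s := by
    intro n
    induction n with
    | zero =>
      intro l hl t s
      rw [hCstar]
      exact le_csSup (hbdd t s) ⟨l, by omega, rfl⟩
    | succ n ih =>
      intro l hl t s
      by_cases hT : l.length ≤ T
      · rw [hCstar]
        exact le_csSup (hbdd t s) ⟨l, hT, rfl⟩
      · have hlong : ¬ (t :: l).Nodup := by
          intro h
          have := h.length_le_card
          simp [Fintype.card_fin] at this
          omega
        rw [List.nodup_cons] at hlong
        by_cases htl : t ∈ l
        · obtain ⟨l1, l2, rfl⟩ := List.append_of_mem htl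
          rw [chainVal_append]
          calc chainVal C t t l1 * chainVal C t s l2
              ≤ 1 * chainVal C t s l2 :=
                mul_le_mul_of_nonneg_right (hcyc t l1) (chainVal_pos hCpos s l2 t).le
            _ = chainVal C t s l2 := one_mul _
            _ ≤ Cstar t s := ih l2 (by simp at hl; omega) t s
        · have hnl : ¬ l.Nodup := by tauto
          obtain ⟨a, l1, l2, l3, rfl⟩ := exists_dup_decomp hnl
          rw [chainVal_append, chainVal_append]
          have h1 : chainVal C a a l2 * chainVal C a s l3 ≤ chainVal C a s l3 := by
            calc chainVal C a a l2 * chainVal C a s l3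
                ≤ 1 * chainVal C a s l3 :=
                  mul_le_mul_of_nonneg_right (hcyc a l2) (chainVal_pos hCpos s l3 a).le
              _ = chainVal C a s l3 := one_mul _
          calc chainVal C t a l1 * (chainVal C a a l2 * chainVal C a s l3)
              ≤ chainVal C t a l1 * chainVal C a s l3 :=
                mul_le_mul_of_nonneg_left h1 (chainVal_pos hCpos a l1 t).le
            _ = chainVal C t s (l1 ++ a :: l3) := (chainVal_append C a s l1 l3 t).symm
            _ ≤ Cstar t s := ih (l1 ++ a :: l3) (by simp at hl ⊢; omega) t s
  have hCstar_pos : ∀ t s, 0 < Cstar t s := by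
    intro t s
    calc (0:ℝ) < C t s := hCpos t s
      _ = chainVal C t s [] := rfl
      _ ≤ Cstar t s := main 0 [] le_rfl t s
  have hlam_bdd : ∀ t : Fin T, BddAbove (Set.range fun τ => Cstar t τ) :=
    fun t => (Set.finite_range _).bddAbove
  have hCstar_le_lam : ∀ t τ : Fin T, Cstar t τ ≤ lam t := by
    intro t τ
    haveI : Nonempty (Fin T) := ⟨t⟩
    rw [hlamdef]
    exact le_ciSup (hlam_bdd t) τ
  constructor
  · intro t
    exact lt_of_lt_of_le (hCstar_pos t t) (hCstar_le_lam t t)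
  · intro t s
    haveI : Nonempty (Fin T) := ⟨t⟩
    have h1 : lam s ≤ lam t / C t s := by
      rw [hlamdef s]
      refine ciSup_le fun τ => ?_
      rw [hCstar s τ]
      refine csSup_le (hne s τ) ?_
      rintro r ⟨l, hlT, rfl⟩
      rw [le_div_iff₀ (hCpos t s)]
      calc chainVal C s τ l * C t s = chainVal C t τ (s :: l) := by
            rw [chainVal]; ring
        _ ≤ Cstar t τ := main (s :: l).length (s :: l) le_rfl t τ
        _ ≤ lam t := hCstar_le_lam t τ
    have h2 : lam s * C t s ≤ lam t := (le_div_iff₀ (hCpos t s)).mp h1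
    rw [hC t s] at h2
    have h3 := mul_le_mul_of_nonneg_right h2 (hd t s).le
    have h4 : lam s * (dotp (P s) (X s) / dotp (P t) (X s)) * dotp (P t) (X s)
        = lam s * dotp (P s) (X s) := by
      field_simp
      rw [mul_div_assoc, div_self (hd t s).ne', mul_one]
    rwa [h4] at h3
end
end

section
/- A trade statistics {(P^t, X^t)}_{t=1}^T satisfies HARP if and only if for every choice of positive real numbers μ^1,…,μ^T the rescaled trade statistics {(P^t, μ^t X^t)}_{t=1}^T satisfies GARP. -/
open scoped BigOperators

noncomputable section

namespace HGAux

open Finset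

lemma dotp_smul_right {m : ℕ} (P : Fin m → ℝ) (c : ℝ) (X : Fin m → ℝ) :
    dotp P (c • X) = c * dotp P X := by
  simp only [dotp, Pi.smul_apply, smul_eq_mul, Finset.mul_sum]
  exact Finset.sum_congr rfl fun i _ => by ring

lemma dotp_pos {m : ℕ} {P X : Fin m → ℝ} (hP : ∀ i, 0 < P i) (hX : X ∈ Rplus (Fin m)) :
    0 < dotp P X := by
  obtain ⟨hX0, hXne⟩ := hX
  obtain ⟨i, hi⟩ := Function.ne_iff.mp hXne
  refine Finset.sum_pos' (fun j _ => mul_nonneg (hP j).le (hX0 j)) ⟨i, Finset.mem_univ i, ?_⟩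
  refine mul_pos (hP i) (lt_of_le_of_ne (hX0 i) (Ne.symm ?_))
  simpa using hi

lemma prod_range_rotate (g : ℕ → ℝ) (n c : ℕ) (hn : 0 < n) :
    ∏ l ∈ Finset.range n, g ((l + c) % n) = ∏ l ∈ Finset.range n, g l := by
  haveI : NeZero n := ⟨hn.ne'⟩
  have h1 : ∏ l ∈ Finset.range n, g ((l + c) % n)
      = ∏ i : Fin n, g ((i.val + c) % n) :=
    (Fin.prod_univ_eq_prod_range (fun l => g ((l + c) % n)) n).symm
  set d : Fin n := ⟨c % n, Nat.mod_lt c hn⟩ with hd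
  have h2 : ∀ i : Fin n, g ((i.val + c) % n) = g ((i + d).val) := by
    intro i
    rw [Fin.add_def]
    simp [hd, Nat.add_mod_mod]
  rw [h1, Finset.prod_congr rfl (fun i _ => h2 i)]
  have h3 : ∏ i : Fin n, g ((i + d).val)
      = ∏ i : Fin n, g i.val := by
    have := Equiv.prod_comp (Equiv.addRight d) (fun i : Fin n => g i.val)
    simpa using this
  rw [h3]
  exact Fin.prod_univ_eq_prod_range (fun l => g l) n


variable {m T : ℕ} (P X : Fin T → Fin m → ℝ)

/-- Cyclic product of cross expenditures. -/
def CP (n : ℕ) (σ : ℕ → Fin T) : ℝ :=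
  ∏ j ∈ range n, dotp (P (σ j)) (X (σ ((j + 1) % n)))

/-- Product of own expenditures. -/
def OP (n : ℕ) (σ : ℕ → Fin T) : ℝ :=
  ∏ j ∈ range n, dotp (P (σ j)) (X (σ j))

lemma epos (hP : ∀ t i, 0 < P t i) (hX : ∀ t, X t ∈ Rplus (Fin m)) (a b : Fin T) :
    0 < dotp (P a) (X b) := dotp_pos (hP a) (hX b)

lemma CP_pos (hP : ∀ t i, 0 < P t i) (hX : ∀ t, X t ∈ Rplus (Fin m)) (n : ℕ) (σ : ℕ → Fin T) :
    0 < CP P X n σ :=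
  Finset.prod_pos fun j _ => epos P X hP hX _ _

lemma OP_pos (hP : ∀ t i, 0 < P t i) (hX : ∀ t, X t ∈ Rplus (Fin m)) (n : ℕ) (σ : ℕ → Fin T) :
    0 < OP P X n σ :=
  Finset.prod_pos fun j _ => epos P X hP hX _ _

lemma fin_add_one_val {k : ℕ} (i : Fin (k+1)) :
    ((i + 1 : Fin (k+1))).val = (i.val + 1) % (k+1) := by
  simp [Fin.add_def, Fin.val_one', Nat.add_mod_mod]

/-- Bridge between `HARP` (Fin-indexed cycles) and `ℕ`-indexed cyclic products. -/
lemma harp_iff_nat :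
    HARP P X ↔ ∀ n : ℕ, 0 < n → ∀ σ : ℕ → Fin T, OP P X n σ ≤ CP P X n σ := by
  constructor
  · intro h n hn σ
    obtain ⟨k, rfl⟩ : ∃ k, n = k + 1 := ⟨n - 1, (Nat.succ_pred_eq_of_pos hn).symm⟩
    have H := h k (fun i => σ i.val)
    have h1 : OP P X (k+1) σ = ∏ i : Fin (k+1), dotp (P (σ i.val)) (X (σ i.val)) := by
      unfold OP
      exact (Fin.prod_univ_eq_prod_range (fun j => dotp (P (σ j)) (X (σ j))) (k+1)).symm
    have h2 : CP P X (k+1) σ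
        = ∏ i : Fin (k+1), dotp (P (σ i.val)) (X (σ ((i.val + 1) % (k+1)))) := by
      unfold CP
      exact (Fin.prod_univ_eq_prod_range
        (fun j => dotp (P (σ j)) (X (σ ((j + 1) % (k+1))))) (k+1)).symm
    rw [h1, h2]
    refine le_trans (le_of_eq ?_) (le_trans H (le_of_eq ?_))
    · rfl
    · refine Finset.prod_congr rfl fun i _ => ?_
      rw [fin_add_one_val]
  · intro h k τ
    set σ : ℕ → Fin T := fun j => τ ⟨j % (k+1), Nat.mod_lt j (Nat.succ_pos k)⟩ with hσ
    have H := h (k+1) (Nat.succ_pos k) σ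
    have h1 : OP P X (k+1) σ = ∏ i : Fin (k+1), dotp (P (τ i)) (X (τ i)) := by
      unfold OP
      rw [← Fin.prod_univ_eq_prod_range (fun j => dotp (P (σ j)) (X (σ j))) (k+1)]
      refine Finset.prod_congr rfl fun i _ => ?_
      have e1 : σ i.val = τ i := by
        simp only [hσ]
        congr 1
        exact Fin.ext (by simpa using Nat.mod_eq_of_lt i.isLt)
      rw [e1]
    have h2 : CP P X (k+1) σ = ∏ i : Fin (k+1), dotp (P (τ i)) (X (τ (i + 1))) := by
      unfold CP
      rw [← Fin.prod_univ_eq_prod_range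
        (fun j => dotp (P (σ j)) (X (σ ((j + 1) % (k+1))))) (k+1)]
      refine Finset.prod_congr rfl fun i _ => ?_
      have e1 : σ i.val = τ i := by
        simp only [hσ]
        congr 1
        exact Fin.ext (by simpa using Nat.mod_eq_of_lt i.isLt)
      have e2 : σ ((i.val + 1) % (k+1)) = τ (i + 1) := by
        simp only [hσ]
        congr 1
        refine Fin.ext ?_
        simp only [fin_add_one_val]
        simpa using Nat.mod_mod_of_dvd (i.val + 1) (dvd_refl (k+1))
      rw [e1, e2]
    rw [h1, h2] at H
    exact H

lemma chain_extract {α : Type*} {rel : α → α → Prop} {t s : α}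
    (h : Relation.TransGen rel t s) :
    ∃ (k : ℕ) (σ : ℕ → α), σ 0 = t ∧ σ (k+1) = s ∧ ∀ j ≤ k, rel (σ j) (σ (j+1)) := by
  induction h with
  | single hrel =>
    rename_i b
    refine ⟨0, fun j => if j = 0 then t else b, by simp, by simp, ?_⟩
    intro j hj
    interval_cases j
    simpa using hrel
  | tail hab hrel ih =>
    obtain ⟨k, σ, h0, hk1, hstep⟩ := ih
    rename_i b c
    refine ⟨k + 1, fun j => if j ≤ k + 1 then σ j else c, by simpa using h0, by simp, ?_⟩
    intro j hj
    rcases Nat.lt_or_ge j (k+1) with hlt | hge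
    · have e1 : (if j ≤ k + 1 then σ j else c) = σ j := if_pos (by omega)
      have e2 : (if j + 1 ≤ k + 1 then σ (j+1) else c) = σ (j+1) := if_pos (by omega)
      simp only [e1, e2]
      exact hstep j (by omega)
    · have hj' : j = k + 1 := by omega
      subst hj'
      have e1 : (if k + 1 ≤ k + 1 then σ (k+1) else c) = σ (k+1) := if_pos le_rfl
      have e2 : (if k + 1 + 1 ≤ k + 1 then σ (k+1+1) else c) = c := if_neg (by omega)
      simp only [e1, e2]
      rw [hk1]
      exact hrel

lemma forward (hP : ∀ t i, 0 < P t i) (hX : ∀ t, X t ∈ Rplus (Fin m))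
    (hH : HARP P X) (μ : Fin T → ℝ) (hμ : ∀ t, 0 < μ t) :
    GARP P (fun t => μ t • X t) := by
  intro t s hts
  obtain ⟨k, σ, h0, hk1, hstep⟩ := chain_extract hts
  subst h0
  subst hk1
  simp only []
  rw [dotp_smul_right, dotp_smul_right]
  set CA : ℝ := ∏ j ∈ range (k+1), dotp (P (σ j)) (X (σ (j+1))) with hCA
  set CB : ℝ := ∏ j ∈ range (k+1), dotp (P (σ j)) (X (σ j)) with hCB
  have hCApos : 0 < CA := Finset.prod_pos fun j _ => epos P X hP hX _ _
  have hCBpos : 0 < CB := Finset.prod_pos fun j _ => epos P X hP hX _ _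
  set F : ℝ := ∏ j ∈ range (k+2), μ (σ j) with hF
  have hFpos : 0 < F := Finset.prod_pos fun j _ => hμ _
  have hprod : (∏ j ∈ range (k+1), μ (σ (j+1))) * CA
      ≤ (∏ j ∈ range (k+1), μ (σ j)) * CB := by
    rw [hCA, hCB, ← Finset.prod_mul_distrib, ← Finset.prod_mul_distrib]
    refine Finset.prod_le_prod (fun j _ => mul_nonneg (hμ _).le (epos P X hP hX _ _).le)
      (fun j hj => ?_)
    have := hstep j (Nat.lt_succ_iff.mp (Finset.mem_range.mp hj))
    simpa [dotp_smul_right] using this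
  have hA1 : (∏ j ∈ range (k+1), μ (σ (j+1))) * μ (σ 0) = F := by
    rw [hF]
    exact (Finset.prod_range_succ' (fun j => μ (σ j)) (k+1)).symm
  have hA2 : (∏ j ∈ range (k+1), μ (σ j)) * μ (σ (k+1)) = F := by
    rw [hF]
    exact (Finset.prod_range_succ (fun j => μ (σ j)) (k+1)).symm
  have h1 : μ (σ (k+1)) * CA ≤ μ (σ 0) * CB := by
    have hm := mul_le_mul_of_nonneg_left hprod
      (mul_pos (hμ (σ 0)) (hμ (σ (k+1)))).le
    have key : F * (μ (σ (k+1)) * CA) ≤ F * (μ (σ 0) * CB) := by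
      calc F * (μ (σ (k+1)) * CA)
          = μ (σ 0) * μ (σ (k+1)) * ((∏ j ∈ range (k+1), μ (σ (j+1))) * CA) := by
            rw [← hA1]; ring
        _ ≤ μ (σ 0) * μ (σ (k+1)) * ((∏ j ∈ range (k+1), μ (σ j)) * CB) := hm
        _ = F * (μ (σ 0) * CB) := by rw [← hA2]; ring
    exact le_of_mul_le_mul_left key hFpos
  have hharp := (harp_iff_nat P X).mp hH (k+2) (by omega) σ
  have hOP : OP P X (k+2) σ = CB * dotp (P (σ (k+1))) (X (σ (k+1))) := by
    unfold OP
    rw [Finset.prod_range_succ, hCB]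
  have hCP : CP P X (k+2) σ = CA * dotp (P (σ (k+1))) (X (σ 0)) := by
    unfold CP
    rw [Finset.prod_range_succ, hCA]
    congr 1
    · refine Finset.prod_congr rfl fun j hj => ?_
      have : (j + 1) % (k + 2) = j + 1 := Nat.mod_eq_of_lt (by
        have := Finset.mem_range.mp hj; omega)
      rw [this]
    · have hmod : (k + 1 + 1) % (k + 2) = 0 := Nat.mod_self _
      rw [hmod]
  rw [hOP, hCP] at hharp
  have h2 := hharp
  set ess : ℝ := dotp (P (σ (k+1))) (X (σ (k+1))) with hess
  set est : ℝ := dotp (P (σ (k+1))) (X (σ 0)) with hest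
  have hestpos : 0 < est := epos P X hP hX _ _
  have ha := mul_le_mul_of_nonneg_left h2 (hμ (σ (k+1))).le
  have hb := mul_le_mul_of_nonneg_right h1 hestpos.le
  have key : CB * (μ (σ (k+1)) * ess) ≤ CB * (μ (σ 0) * est) := by nlinarith
  exact le_of_mul_le_mul_left key hCBpos

lemma CP_rotate (n c : ℕ) (hn : 0 < n) (σ : ℕ → Fin T) :
    CP P X n (fun l => σ ((l + c) % n)) = CP P X n σ := by
  unfold CP
  set g : ℕ → ℝ := fun x => dotp (P (σ (x % n))) (X (σ ((x + 1) % n))) with hg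
  have h1 : ∀ l ∈ range n,
      dotp (P (σ ((l + c) % n))) (X (σ (((l + 1) % n + c) % n))) = g ((l + c) % n) := by
    intro l _
    simp only [hg]
    have e1 : ((l + 1) % n + c) % n = (l + c + 1) % n := by
      rw [Nat.mod_add_mod]; congr 1; omega
    have e2 : ((l + c) % n) % n = (l + c) % n := Nat.mod_mod_of_dvd _ dvd_rfl
    have e3 : ((l + c) % n + 1) % n = (l + c + 1) % n := Nat.mod_add_mod _ _ _
    rw [e1, e2, e3]
  calc (∏ l ∈ range n, dotp (P (σ ((l + c) % n))) (X (σ (((l + 1) % n + c) % n))))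
      = ∏ l ∈ range n, g ((l + c) % n) := Finset.prod_congr rfl h1
    _ = ∏ l ∈ range n, g l := prod_range_rotate g n c hn
    _ = ∏ l ∈ range n, dotp (P (σ l)) (X (σ ((l + 1) % n))) := by
        refine Finset.prod_congr rfl fun l hl => ?_
        simp only [hg]
        rw [Nat.mod_eq_of_lt (Finset.mem_range.mp hl)]

lemma OP_rotate (n c : ℕ) (hn : 0 < n) (σ : ℕ → Fin T) :
    OP P X n (fun l => σ ((l + c) % n)) = OP P X n σ := by
  unfold OP
  set g : ℕ → ℝ := fun x => dotp (P (σ (x % n))) (X (σ (x % n))) with hg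
  have h1 : ∀ l ∈ range n,
      dotp (P (σ ((l + c) % n))) (X (σ ((l + c) % n))) = g ((l + c) % n) := by
    intro l _
    simp only [hg]
    rw [Nat.mod_mod_of_dvd _ dvd_rfl]
  calc (∏ l ∈ range n, dotp (P (σ ((l + c) % n))) (X (σ ((l + c) % n))))
      = ∏ l ∈ range n, g ((l + c) % n) := Finset.prod_congr rfl h1
    _ = ∏ l ∈ range n, g l := prod_range_rotate g n c hn
    _ = ∏ l ∈ range n, dotp (P (σ l)) (X (σ l)) := by
        refine Finset.prod_congr rfl fun l hl => ?_
        simp only [hg]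
        rw [Nat.mod_eq_of_lt (Finset.mem_range.mp hl)]

lemma CP_split (σ : ℕ → Fin T) (a b : ℕ) (ha : 0 < a) (hb : 0 < b) (hσ : σ a = σ 0) :
    CP P X (a + b) σ = CP P X a σ * CP P X b (fun i => σ (a + i)) := by
  unfold CP
  rw [Finset.prod_range_add]
  congr 1
  · refine Finset.prod_congr rfl fun j hj => ?_
    have hj' : j < a := Finset.mem_range.mp hj
    rcases Nat.lt_or_ge (j + 1) a with h | h
    · rw [Nat.mod_eq_of_lt (by omega), Nat.mod_eq_of_lt h]
    · have hja : j + 1 = a := by omega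
      rw [hja, Nat.mod_eq_of_lt (by omega), Nat.mod_self, hσ]
  · refine Finset.prod_congr rfl fun i hi => ?_
    have hi' : i < b := Finset.mem_range.mp hi
    rcases Nat.lt_or_ge (i + 1) b with h | h
    · rw [Nat.mod_eq_of_lt (by omega), Nat.mod_eq_of_lt h]
      simp [Nat.add_assoc]
    · have hib : i + 1 = b := by omega
      have h1 : (a + i + 1) % (a + b) = 0 := by
        rw [show a + i + 1 = a + b by omega]; exact Nat.mod_self _
      have h2 : (i + 1) % b = 0 := by rw [hib]; exact Nat.mod_self _
      rw [h1, h2]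
      simp [hσ]

lemma OP_split (σ : ℕ → Fin T) (a b : ℕ) :
    OP P X (a + b) σ = OP P X a σ * OP P X b (fun i => σ (a + i)) := by
  unfold OP
  rw [Finset.prod_range_add]

lemma backward (hP : ∀ t i, 0 < P t i) (hX : ∀ t, X t ∈ Rplus (Fin m))
    (hG : ∀ μ : Fin T → ℝ, (∀ t, 0 < μ t) → GARP P (fun t => μ t • X t)) :
    HARP P X := by
  classical
  rw [harp_iff_nat]
  by_contra hc
  push_neg at hc
  obtain ⟨n', hn', σ', hlt'⟩ := hc
  have hex : ∃ n, 0 < n ∧ ∃ σ : ℕ → Fin T, CP P X n σ < OP P X n σ :=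
    ⟨n', hn', σ', hlt'⟩
  have H := Nat.find_spec hex
  have Hmin : ∀ m', m' < Nat.find hex →
      ¬ (0 < m' ∧ ∃ σ : ℕ → Fin T, CP P X m' σ < OP P X m' σ) :=
    fun m' h => Nat.find_min hex h
  generalize hn0eq : Nat.find hex = n0 at H Hmin
  obtain ⟨hn0, σ, hσlt⟩ := H
  clear hn0eq hlt' hn' σ' n'
  -- injectivity of σ on [0, n0)
  have hinj : ∀ i j, i < n0 → j < n0 → σ i = σ j → i = j := by
    intro i j hi hj hij
    by_contra hne
    wlog hlt : i < j generalizing i j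
    · exact this j i hj hi hij.symm (Ne.symm hne) (by omega)
    set σ2 : ℕ → Fin T := fun l => σ ((l + i) % n0) with hσ2
    have hCPr : CP P X n0 σ2 = CP P X n0 σ := CP_rotate P X n0 i hn0 σ
    have hOPr : OP P X n0 σ2 = OP P X n0 σ := OP_rotate P X n0 i hn0 σ
    set a := j - i with hadef
    set b := n0 - a with hbdef
    have ha : 0 < a := by omega
    have hb : 0 < b := by omega
    have hab : a + b = n0 := by omega
    have hkey : σ2 a = σ2 0 := by
      simp only [hσ2]
      have e1 : (a + i) % n0 = j := by
        rw [show a + i = j by omega]; exact Nat.mod_eq_of_lt hj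
      have e2 : (0 + i) % n0 = i := by
        rw [Nat.zero_add]; exact Nat.mod_eq_of_lt hi
      rw [e1, e2]
      exact hij.symm
    have hsplitCP : CP P X n0 σ2 = CP P X a σ2 * CP P X b (fun l => σ2 (a + l)) := by
      have := CP_split P X σ2 a b ha hb hkey
      rw [hab] at this
      exact this
    have hsplitOP : OP P X n0 σ2 = OP P X a σ2 * OP P X b (fun l => σ2 (a + l)) := by
      have := OP_split P X σ2 a b
      rw [hab] at this
      exact this
    have hcase : CP P X a σ2 < OP P X a σ2 ∨
        CP P X b (fun l => σ2 (a + l)) < OP P X b (fun l => σ2 (a + l)) := by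
      by_contra hno
      push_neg at hno
      obtain ⟨h1, h2⟩ := hno
      have hle : OP P X n0 σ2 ≤ CP P X n0 σ2 := by
        rw [hsplitCP, hsplitOP]
        exact mul_le_mul h1 h2 (OP_pos P X hP hX b _).le (CP_pos P X hP hX a _).le
      rw [hCPr, hOPr] at hle
      exact absurd hσlt (not_lt.mpr hle)
    rcases hcase with hcase | hcase
    · exact Hmin a (by omega) ⟨ha, _, hcase⟩
    · exact Hmin b (by omega) ⟨hb, _, hcase⟩
  -- n0 ≥ 2
  have hn2 : 2 ≤ n0 := by
    by_contra h
    have h1 : n0 = 1 := by omega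
    subst h1
    have : CP P X 1 σ = OP P X 1 σ := by
      unfold CP OP
      simp
    rw [this] at hσlt
    exact lt_irrefl _ hσlt
  obtain ⟨k, hk⟩ : ∃ k, n0 = k + 2 := ⟨n0 - 2, by omega⟩
  subst hk
  set o : ℕ → ℝ := fun i => dotp (P (σ i)) (X (σ i)) with ho
  set cr : ℕ → ℝ := fun i => dotp (P (σ i)) (X (σ (i + 1))) with hcr
  have hopos : ∀ i, 0 < o i := fun i => epos P X hP hX _ _
  have hcpos : ∀ i, 0 < cr i := fun i => epos P X hP hX _ _
  set μ : Fin T → ℝ := fun t => if h : ∃ i, i < k + 2 ∧ σ i = t then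
      (∏ l ∈ range h.choose, o l) / (∏ l ∈ range h.choose, cr l) else 1 with hμdef
  have hμpos : ∀ t, 0 < μ t := by
    intro t
    simp only [hμdef]
    split
    · exact div_pos (Finset.prod_pos fun l _ => hopos l)
        (Finset.prod_pos fun l _ => hcpos l)
    · exact one_pos
  have hμval : ∀ j, j < k + 2 →
      μ (σ j) = (∏ l ∈ range j, o l) / (∏ l ∈ range j, cr l) := by
    intro j hj
    have hex2 : ∃ i, i < k + 2 ∧ σ i = σ j := ⟨j, hj, rfl⟩
    simp only [hμdef]
    rw [dif_pos hex2]
    have hcsp := hex2.choose_spec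
    have he : hex2.choose = j := hinj _ _ hcsp.1 hj hcsp.2
    rw [he]
  have hGARP := hG μ hμpos
  have hrel : ∀ j, j + 1 < k + 2 →
      dotp (P (σ j)) ((fun t => μ t • X t) (σ (j + 1)))
        ≤ dotp (P (σ j)) ((fun t => μ t • X t) (σ j)) := by
    intro j hj
    simp only []
    rw [dotp_smul_right, dotp_smul_right, hμval j (by omega), hμval (j + 1) hj]
    have hBne : (∏ l ∈ range j, cr l) ≠ 0 :=
      (Finset.prod_pos fun l _ => hcpos l).ne'
    have hcne : cr j ≠ 0 := (hcpos j).ne'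
    apply le_of_eq
    rw [Finset.prod_range_succ, Finset.prod_range_succ]
    show (∏ l ∈ range j, o l) * o j / ((∏ l ∈ range j, cr l) * cr j)
        * dotp (P (σ j)) (X (σ (j + 1)))
      = (∏ l ∈ range j, o l) / (∏ l ∈ range j, cr l) * dotp (P (σ j)) (X (σ j))
    have hcrj : cr j = dotp (P (σ j)) (X (σ (j + 1))) := rfl
    have hoj : o j = dotp (P (σ j)) (X (σ j)) := rfl
    rw [← hcrj, ← hoj]
    field_simp
  have hchain : ∀ j, 0 < j → j < k + 2 → Relation.TransGen
      (fun a b => dotp (P a) ((fun t => μ t • X t) b)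
        ≤ dotp (P a) ((fun t => μ t • X t) a)) (σ 0) (σ j) := by
    intro j
    induction j with
    | zero => omega
    | succ j ih =>
      intro _ hj
      rcases Nat.eq_zero_or_pos j with hj0 | hj0
      · subst hj0
        exact Relation.TransGen.single (hrel 0 hj)
      · exact Relation.TransGen.tail (ih hj0 (by omega)) (hrel j hj)
  have hg2 := hGARP (σ 0) (σ (k + 1)) (hchain (k + 1) (by omega) (by omega))
  simp only [] at hg2
  rw [dotp_smul_right, dotp_smul_right, hμval (k + 1) (by omega),
    hμval 0 (by omega)] at hg2
  simp only [Finset.range_zero, Finset.prod_empty] at hg2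
  -- hg2 : A / B * dotp (P (σ (k+1))) (X (σ (k+1))) ≤ 1/1 * dotp (P (σ (k+1))) (X (σ 0))
  set A : ℝ := ∏ l ∈ range (k + 1), o l with hA
  set B : ℝ := ∏ l ∈ range (k + 1), cr l with hB
  have hApos : 0 < A := Finset.prod_pos fun l _ => hopos l
  have hBpos : 0 < B := Finset.prod_pos fun l _ => hcpos l
  have hg3 : A * o (k + 1) ≤ B * dotp (P (σ (k + 1))) (X (σ 0)) := by
    have hoeq : o (k + 1) = dotp (P (σ (k + 1))) (X (σ (k + 1))) := rfl
    rw [hoeq]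
    rw [div_mul_eq_mul_div, div_le_iff₀ hBpos] at hg2
    calc A * dotp (P (σ (k + 1))) (X (σ (k + 1)))
        ≤ 1 / 1 * dotp (P (σ (k + 1))) (X (σ 0)) * B := hg2
      _ = B * dotp (P (σ (k + 1))) (X (σ 0)) := by ring
  have hOPeq : OP P X (k + 2) σ = A * o (k + 1) := by
    unfold OP
    rw [Finset.prod_range_succ]
  have hCPeq : CP P X (k + 2) σ = B * dotp (P (σ (k + 1))) (X (σ 0)) := by
    unfold CP
    rw [Finset.prod_range_succ]
    congr 1
    · rw [hB]
      refine Finset.prod_congr rfl fun j hj => ?_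
      have : (j + 1) % (k + 2) = j + 1 :=
        Nat.mod_eq_of_lt (by have := Finset.mem_range.mp hj; omega)
      rw [hcr]
      simp only [this]
    · have : (k + 1 + 1) % (k + 2) = 0 := Nat.mod_self _
      rw [this]
  rw [hOPeq, hCPeq] at hσlt
  exact absurd hg3 (not_le.mpr hσlt)

end HGAux

/-- A trade statistics satisfies HARP iff every rescaling of its consumption
data satisfies GARP. -/
theorem harp_iff_forall_rescaling_garp {m T : ℕ} (P X : Fin T → Fin m → ℝ)
    (hP : ∀ t i, 0 < P t i) (hX : ∀ t, X t ∈ Rplus (Fin m)) :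
    HARP P X ↔
    ∀ μ : Fin T → ℝ, (∀ t, 0 < μ t) → GARP P (fun t => μ t • X t) := by
  constructor
  · intro hH μ hμ
    exact HGAux.forward P X hP hX hH μ hμ
  · intro hG
    exact HGAux.backward P X hP hX hG
end
end

section
/- Let P : ℝ^m_+ → ℝ^m be an inverse demand map, i.e. P is nonnegative and continuous on ℝ^m_+ with ⟨P(X), X⟩ > 0 for all X ∈ ℝ^m_+. Then the following are equivalent: (1) P is rationalizable in Φ_H; (2) the system of inequalities λ(Y)⟨P(Y), X⟩ ≥ λ(X)⟨P(X), X⟩ (for all X, Y ∈ ℝ^m_+) has a solution λ : ℝ^m_+ → ℝ that is positive and continuous on the interior of ℝ^m_+; (3) P satisfies HARP: for any finite set of vectors X^1,…,X^T ∈ ℝ^m_+, ⟨P(X^1), X^2⟩ · ⟨P(X^2), X^3⟩ ⋯ ⟨P(X^T), X^1⟩ ≥ ⟨P(X^1), X^1⟩ ⋯ ⟨P(X^T), X^T⟩; (4) there exist a price index function Q ∈ Φ_H and a consumption index function F ∈ Φ_H such that Q(P)F(X) ≤ ⟨P, X⟩ for all P ∈ ℝ^m_+ and X ∈ ℝ^m_+,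 and Q(P(X))F(X) = ⟨P(X), X⟩ for all X ∈ ℝ^m_+. -/
open scoped BigOperators

noncomputable section

namespace RatAux
variable {m : ℕ}

abbrev V (m : ℕ) := Fin m → ℝ

def ones (m : ℕ) : V m := fun _ => 1

lemma dotp_comm (a b : V m) : dotp a b = dotp b a := by
  unfold dotp; exact Finset.sum_congr rfl fun i _ => mul_comm _ _

lemma dotp_nonneg {a b : V m} (ha : ∀ i, 0 ≤ a i) (hb : 0 ≤ b) : 0 ≤ dotp a b :=
  Finset.sum_nonneg fun i _ => mul_nonneg (ha i) (hb i)

lemma dotp_smul_left (c : ℝ) (a b : V m) : dotp (c • a) b = c * dotp a b := by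
  unfold dotp; rw [Finset.mul_sum]; exact Finset.sum_congr rfl fun i _ => by
    simp [Pi.smul_apply, smul_eq_mul]; ring

lemma dotp_smul_right (c : ℝ) (a b : V m) : dotp a (c • b) = c * dotp a b := by
  rw [dotp_comm, dotp_smul_left, dotp_comm]

lemma dotp_add_right (a b c : V m) : dotp a (b + c) = dotp a b + dotp a c := by
  unfold dotp; rw [← Finset.sum_add_distrib]; exact Finset.sum_congr rfl fun i _ => by
    simp [Pi.add_apply]; ring

lemma dotp_mono_right {a : V m} (ha : ∀ i, 0 ≤ a i) {b c : V m} (h : b ≤ c) :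
    dotp a b ≤ dotp a c :=
  Finset.sum_le_sum fun i _ => mul_le_mul_of_nonneg_left (h i) (ha i)

lemma dotp_zero_right (a : V m) : dotp a 0 = 0 := by simp [dotp]

lemma continuous_dotp_left (b : V m) : Continuous fun a : V m => dotp a b := by
  unfold dotp
  exact continuous_finset_sum _ fun i _ => (continuous_apply i).mul continuous_const

lemma continuous_dotp_right (a : V m) : Continuous fun b : V m => dotp a b := by
  unfold dotp
  exact continuous_finset_sum _ fun i _ => continuous_const.mul (continuous_apply i)

lemma tendsto_dotp {α : Type*} {l : Filter α} {u v : α → V m} {a b : V m}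
    (hu : Filter.Tendsto u l (nhds a)) (hv : Filter.Tendsto v l (nhds b)) :
    Filter.Tendsto (fun x => dotp (u x) (v x)) l (nhds (dotp a b)) := by
  unfold dotp
  exact tendsto_finset_sum _ fun i _ =>
    (((continuous_apply i).tendsto a).comp hu).mul (((continuous_apply i).tendsto b).comp hv)

lemma mem_Rplus {X : V m} (h : X ∈ Rplus (Fin m)) : 0 ≤ X ∧ X ≠ 0 := h

lemma exists_pos_coord {X : V m} (h : X ∈ Rplus (Fin m)) : ∃ i, 0 < X i := by
  obtain ⟨h0, hne⟩ := h
  obtain ⟨i, hi⟩ := Function.ne_iff.mp hne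
  exact ⟨i, lt_of_le_of_ne (h0 i) (by simpa using (Ne.symm hi))⟩

lemma dotp_ones_pos {X : V m} (h0 : 0 ≤ X) (i : Fin m) (hi : 0 < X i) :
    0 < dotp X (ones m) := by
  unfold dotp ones
  have : ∀ j ∈ Finset.univ, 0 ≤ X j * 1 := fun j _ => by simpa using h0 j
  refine Finset.sum_pos' this ⟨i, Finset.mem_univ i, by simpa using hi⟩

lemma interior_pos {X : V m} (h : X ∈ interior (Rplus (Fin m))) : ∀ i, 0 < X i := by
  intro i
  have hX : X ∈ Rplus (Fin m) := interior_subset h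
  rcases lt_or_eq_of_le (hX.1 i) with hlt | heq
  · exact hlt
  · exfalso
    obtain ⟨ε, hε, hball⟩ := Metric.mem_nhds_iff.mp (mem_interior_iff_mem_nhds.mp h)
    set Y := Function.update X i (-(ε/2)) with hY
    have hdist : dist Y X < ε := by
      rw [dist_pi_lt_iff hε]
      intro j
      rcases eq_or_ne j i with rfl | hj
      · have hXj : X j = 0 := by simpa using heq.symm
        have : dist (Y j) (X j) = ε / 2 := by
          simp [hY, Real.dist_eq, hXj]
          exact hε.le
        rw [this]; linarith
      · simp [hY, Function.update_of_ne hj, Real.dist_eq, hε]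
    have hYmem : Y ∈ Rplus (Fin m) := hball (by simpa [Metric.mem_ball] using hdist)
    have := hYmem.1 i
    simp [hY] at this
    linarith

lemma mem_interior_of_pos {X : V m} (hm : 0 < m) (h : ∀ i, 0 < X i) :
    X ∈ interior (Rplus (Fin m)) := by
  have hopen : IsOpen {Y : V m | ∀ i, 0 < Y i} := by
    have : {Y : V m | ∀ i, 0 < Y i} = ⋂ i, (fun Y : V m => Y i) ⁻¹' Set.Ioi 0 := by
      ext Y; simp [Set.mem_iInter]
    rw [this]
    exact isOpen_iInter_of_finite fun i => isOpen_Ioi.preimage (continuous_apply i)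
  have hsub : {Y : V m | ∀ i, 0 < Y i} ⊆ Rplus (Fin m) := by
    intro Y hY
    refine ⟨fun i => le_of_lt (hY i), ?_⟩
    intro h0
    have := hY ⟨0, hm⟩
    rw [h0] at this
    simp at this
  exact mem_interior.mpr ⟨_, hsub, hopen, h⟩

lemma shrink {X0 : V m} (hX0 : X0 ∈ Rplus (Fin m)) {δ : ℝ} (hδ : 0 < δ) :
    ∃ r > 0, ∀ X ∈ Rplus (Fin m), dist X X0 < r → (1 - δ) • X0 ≤ X := by
  obtain ⟨i0, hi0⟩ := exists_pos_coord hX0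
  have : Nonempty (Fin m) := ⟨i0⟩
  set c : ℝ := Finset.univ.inf' Finset.univ_nonempty (fun i => if X0 i ≤ 0 then 1 else X0 i) with hc
  have hcpos : 0 < c := by
    rw [hc, Finset.lt_inf'_iff]
    intro i _
    split_ifs with h
    · norm_num
    · exact lt_of_not_ge h
  refine ⟨δ * c, mul_pos hδ hcpos, fun X hX hd => ?_⟩
  intro i
  rcases le_or_gt (X0 i) 0 with h0 | h0
  · have : X0 i = 0 := le_antisymm h0 (hX0.1 i)
    simp [this]
    exact hX.1 i
  · have hci : c ≤ X0 i := by
      rw [hc]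
      refine le_trans (Finset.inf'_le _ (Finset.mem_univ i)) ?_
      simp [not_le.mpr h0]
    have hdi : |X i - X0 i| < δ * c := lt_of_le_of_lt (by
      have := dist_le_pi_dist X X0 i
      rwa [Real.dist_eq] at this) hd
    have : X0 i - δ * c ≤ X i := by
      have := abs_lt.mp hdi
      linarith [this.1]
    have : X0 i - δ * X0 i ≤ X i := by nlinarith
    simpa [Pi.smul_apply, smul_eq_mul, sub_mul] using this


/-! ### inf of linear functionals with nonnegative coefficients -/

def gfun (A : Set (V m)) (X : V m) : ℝ := sInf ((fun a => dotp a X) '' A)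

section gfun
variable {A : Set (V m)} (hne : A.Nonempty) (hA0 : ∀ a ∈ A, ∀ i, 0 ≤ a i)
include hne hA0
set_option linter.unusedSectionVars false

lemma gfun_bddBelow {X : V m} (hX : 0 ≤ X) : BddBelow ((fun a => dotp a X) '' A) := by
  refine ⟨0, fun v hv => ?_⟩
  obtain ⟨a, ha, rfl⟩ := hv
  exact dotp_nonneg (hA0 a ha) hX

lemma gfun_le {X : V m} (hX : 0 ≤ X) {a : V m} (ha : a ∈ A) : gfun A X ≤ dotp a X :=
  csInf_le (gfun_bddBelow hne hA0 hX) ⟨a, ha, rfl⟩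

lemma le_gfun {X : V m} {b : ℝ} (h : ∀ a ∈ A, b ≤ dotp a X) : b ≤ gfun A X :=
  le_csInf (hne.image _) (by rintro v ⟨a, ha, rfl⟩; exact h a ha)

lemma gfun_nonneg {X : V m} (hX : 0 ≤ X) : 0 ≤ gfun A X :=
  le_gfun hne hA0 fun a ha => dotp_nonneg (hA0 a ha) hX

lemma gfun_mono {X Y : V m} (hX : 0 ≤ X) (hXY : X ≤ Y) : gfun A X ≤ gfun A Y :=
  le_gfun hne hA0 fun a ha =>
    le_trans (gfun_le hne hA0 hX ha) (dotp_mono_right (hA0 a ha) hXY)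

lemma gfun_homog {X : V m} (hX : 0 ≤ X) {α : ℝ} (hα : 0 < α) :
    gfun A (α • X) = α * gfun A X := by
  have hαX : 0 ≤ α • X := smul_nonneg (le_of_lt hα) hX
  apply le_antisymm
  · have h1 : gfun A (α • X) / α ≤ gfun A X := by
      refine le_gfun hne hA0 fun a ha => ?_
      rw [div_le_iff₀ hα, mul_comm]
      calc gfun A (α • X) ≤ dotp a (α • X) := gfun_le hne hA0 hαX ha
        _ = α * dotp a X := dotp_smul_right α a X
    calc gfun A (α • X) = α * (gfun A (α • X) / α) := by field_simp
      _ ≤ α * gfun A X := by nlinarith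
  · refine le_gfun hne hA0 fun a ha => ?_
    rw [dotp_smul_right]
    exact mul_le_mul_of_nonneg_left (gfun_le hne hA0 hX ha) (le_of_lt hα)

lemma gfun_superadd {X Y : V m} (hX : 0 ≤ X) (hY : 0 ≤ Y) :
    gfun A X + gfun A Y ≤ gfun A (X + Y) := by
  refine le_gfun hne hA0 fun a ha => ?_
  rw [dotp_add_right]
  exact add_le_add (gfun_le hne hA0 hX ha) (gfun_le hne hA0 hY ha)

lemma gfun_concave {X Y : V m} (hX : 0 ≤ X) (hY : 0 ≤ Y) {a b : ℝ}
    (hb0 : 0 ≤ a) (hb : 0 ≤ b) (hab : a + b = 1) :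
    a * gfun A X + b * gfun A Y ≤ gfun A (a • X + b • Y) := by
  rcases eq_or_lt_of_le hb0 with rfl | ha'
  · have : b = 1 := by linarith
    subst this; simp
  rcases eq_or_lt_of_le hb with rfl | hb'
  · have : a = 1 := by linarith
    subst this; simp
  calc a * gfun A X + b * gfun A Y = gfun A (a • X) + gfun A (b • Y) := by
        rw [gfun_homog hne hA0 hX ha', gfun_homog hne hA0 hY hb']
    _ ≤ gfun A (a • X + b • Y) :=
        gfun_superadd hne hA0 (smul_nonneg (le_of_lt ha') hX) (smul_nonneg (le_of_lt hb') hY)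

lemma gfun_continuousOn : ContinuousOn (gfun A) (Rplus (Fin m)) := by
  intro X0 hX0
  rw [Metric.continuousWithinAt_iff]
  intro ε hε
  set G := gfun A X0 with hG
  have hG0 : 0 ≤ G := gfun_nonneg hne hA0 hX0.1
  -- near-optimal linear functional for the upper bound
  have himg : ((fun a => dotp a X0) '' A).Nonempty := hne.image _
  have hlt : sInf ((fun a => dotp a X0) '' A) < G + ε / 2 := by
    have : (0:ℝ) < ε / 2 := by linarith
    unfold gfun at hG; linarith
  obtain ⟨v, ⟨a, ha, rfl⟩, hv⟩ := exists_lt_of_csInf_lt himg hlt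
  obtain ⟨δ1, hδ1, hδ1p⟩ := Metric.continuousAt_iff.mp
    ((continuous_dotp_right a).continuousAt (x := X0)) (ε/2) (by linarith)
  -- radius for the lower bound
  set δ : ℝ := min (1/2) (ε/(2*(G+1))) with hδdef
  have hδpos : 0 < δ := lt_min (by norm_num) (by positivity)
  have hδG : δ * G ≤ ε / 2 := by
    have h1 : δ ≤ ε/(2*(G+1)) := min_le_right _ _
    have h2 : δ * G ≤ (ε/(2*(G+1))) * (G+1) := by nlinarith
    have h3 : (ε/(2*(G+1))) * (G+1) = ε/2 := by field_simp
    linarith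
  obtain ⟨r2, hr2, hr2p⟩ := shrink hX0 hδpos
  refine ⟨min δ1 r2, lt_min hδ1 hr2, fun X hX hd => ?_⟩
  have hd1 : dist X X0 < δ1 := lt_of_lt_of_le hd (min_le_left _ _)
  have hd2 : dist X X0 < r2 := lt_of_lt_of_le hd (min_le_right _ _)
  -- upper estimate
  have hup : gfun A X < G + ε := by
    have h1 : gfun A X ≤ dotp a X := gfun_le hne hA0 hX.1 ha
    have h2 : |dotp a X - dotp a X0| < ε/2 := by
      have := hδ1p hd1; rwa [Real.dist_eq] at this
    have := (abs_lt.mp h2).2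
    linarith
  -- lower estimate
  have hlow : G - ε < gfun A X := by
    have hle : (1 - δ) • X0 ≤ X := hr2p X hX hd2
    have h0 : (0:V m) ≤ (1 - δ) • X0 := smul_nonneg (by
      have : δ ≤ 1/2 := min_le_left _ _
      linarith) hX0.1
    have h1 : gfun A ((1 - δ) • X0) ≤ gfun A X := gfun_mono hne hA0 h0 hle
    have h2 : gfun A ((1 - δ) • X0) = (1 - δ) * G := by
      rcases eq_or_lt_of_le hδpos.le with h | h
      · exact absurd h (ne_of_lt hδpos)
      · have hδlt : δ < 1 := lt_of_le_of_lt (min_le_left _ _) (by norm_num)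
        exact gfun_homog hne hA0 hX0.1 (by linarith)
    nlinarith
  rw [Real.dist_eq, abs_lt]
  constructor <;> linarith

lemma gfun_pos_interior (hones : 0 < gfun A (ones m)) {X : V m}
    (hX : X ∈ interior (Rplus (Fin m))) : 0 < gfun A X := by
  have hXR : X ∈ Rplus (Fin m) := interior_subset hX
  obtain ⟨i0, _⟩ := exists_pos_coord hXR
  have : Nonempty (Fin m) := ⟨i0⟩
  set c : ℝ := Finset.univ.inf' Finset.univ_nonempty X with hc
  have hcpos : 0 < c := by
    rw [hc, Finset.lt_inf'_iff]
    exact fun i _ => interior_pos hX i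
  have hge : c • ones m ≤ X := by
    intro i
    have h : c ≤ X i := Finset.inf'_le X (Finset.mem_univ i)
    simpa [ones, Pi.smul_apply, smul_eq_mul] using h
  calc (0:ℝ) < c * gfun A (ones m) := by positivity
    _ = gfun A (c • ones m) := (gfun_homog hne hA0 (fun i => by norm_num [ones]) hcpos).symm
    _ ≤ gfun A X := gfun_mono hne hA0 (smul_nonneg hcpos.le (fun i => by norm_num [ones])) hge

lemma gfun_nonsat (hones : 0 < gfun A (ones m)) {X : V m} (hX : X ∈ Rplus (Fin m))
    {ε : ℝ} (hε : 0 < ε) :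
    ∃ Y ∈ Rplus (Fin m), dist Y X < ε ∧ gfun A X < gfun A Y := by
  set δ : ℝ := ε / (2 * (‖ones m‖ + 1)) with hδdef
  have hn1 : (0:ℝ) ≤ ‖ones m‖ := norm_nonneg _
  have hδpos : 0 < δ := by positivity
  refine ⟨X + δ • ones m, ⟨?_, ?_⟩, ?_, ?_⟩
  · intro i
    have := hX.1 i
    have : (0:ℝ) ≤ δ * 1 := by positivity
    simpa [ones] using add_nonneg (hX.1 i) (by positivity : (0:ℝ) ≤ δ * 1)
  · obtain ⟨i0, hi0⟩ := exists_pos_coord hX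
    intro h0
    have := congrFun h0 i0
    simp [ones] at this
    nlinarith
  · have : (X + δ • ones m) - X = δ • ones m := by abel
    rw [dist_eq_norm, this, norm_smul, Real.norm_eq_abs, abs_of_pos hδpos]
    calc δ * ‖ones m‖ ≤ δ * (‖ones m‖ + 1) := by nlinarith
      _ = ε / 2 := by rw [hδdef]; field_simp
      _ < ε := by linarith
  · have h1 : gfun A X + gfun A (δ • ones m) ≤ gfun A (X + δ • ones m) :=
      gfun_superadd hne hA0 hX.1 (smul_nonneg hδpos.le (fun i => by norm_num [ones]))
    have h2 : gfun A (δ • ones m) = δ * gfun A (ones m) :=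
      gfun_homog hne hA0 (fun i => by norm_num [ones]) hδpos
    nlinarith

lemma isPhiH_gfun (hones : 0 < gfun A (ones m)) : IsPhiH (gfun A) := by
  refine ⟨⟨fun X hX => gfun_nonneg hne hA0 hX.1, gfun_continuousOn hne hA0,
    fun X hX Y hY a b ha hb hab => gfun_concave hne hA0 hX.1 hY.1 ha hb hab,
    fun X hX Y hY hXY => gfun_mono hne hA0 hX.1 hXY,
    fun X hX => gfun_pos_interior hne hA0 hones hX,
    fun X hX ε hε => gfun_nonsat hne hA0 hones hX hε⟩,
    fun X hX α hα => gfun_homog hne hA0 hX.1 hα⟩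

end gfun
lemma ones_mem (hm : 0 < m) : ones m ∈ Rplus (Fin m) := by
  refine ⟨fun i => by norm_num [ones], fun h0 => ?_⟩
  have := congrFun h0 ⟨0, hm⟩
  simp [ones] at this

section chains
variable (P : V m → V m)

def chainCoef (n : ℕ) (c : Fin (n + 1) → V m) : V m :=
  ((∏ s : Fin n, dotp (P (c s.castSucc)) (c s.succ) / dotp (P (c s.castSucc)) (c s.castSucc))
    / dotp (P (c (Fin.last n))) (c (Fin.last n))) • P (c (Fin.last n))

def AF : Set (V m) :=
  {a | ∃ (n : ℕ) (c : Fin (n + 1) → V m),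
    c 0 = ones m ∧ (∀ i, c i ∈ Rplus (Fin m)) ∧ a = chainCoef P n c}

variable {P}
variable (hPnn : ∀ X ∈ Rplus (Fin m), ∀ i, 0 ≤ P X i)
    (hPpos : ∀ X ∈ Rplus (Fin m), 0 < dotp (P X) X)
include hPnn hPpos
set_option linter.unusedSectionVars false

lemma PX_mem {X : V m} (hX : X ∈ Rplus (Fin m)) : P X ∈ Rplus (Fin m) := by
  refine ⟨fun i => hPnn X hX i, fun h0 => ?_⟩
  have := hPpos X hX
  rw [h0] at this
  simp [dotp] at this

lemma AF_nonneg : ∀ a ∈ AF P, ∀ i, 0 ≤ a i := by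
  rintro a ⟨n, c, hc0, hcmem, rfl⟩ i
  unfold chainCoef
  have hprod : 0 ≤ ∏ s : Fin n,
      dotp (P (c s.castSucc)) (c s.succ) / dotp (P (c s.castSucc)) (c s.castSucc) :=
    Finset.prod_nonneg fun s _ => div_nonneg
      (dotp_nonneg (hPnn _ (hcmem _)) (hcmem _).1) (le_of_lt (hPpos _ (hcmem _)))
  exact mul_nonneg (div_nonneg hprod (le_of_lt (hPpos _ (hcmem _)))) (hPnn _ (hcmem _) i)

lemma chainCoef_snoc (n : ℕ) (c : Fin (n + 1) → V m) (X : V m) :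
    chainCoef P (n + 1) (Fin.snoc c X) =
      ((dotp (chainCoef P n c) X) / dotp (P X) X) • P X := by
  unfold chainCoef
  rw [dotp_smul_left, Fin.prod_univ_castSucc]
  simp only [Fin.succ_castSucc, Fin.snoc_castSucc, Fin.succ_last, Fin.snoc_last]
  congr 1
  ring

lemma AF_ext {a X : V m} (ha : a ∈ AF P) (hX : X ∈ Rplus (Fin m)) :
    ((dotp a X) / dotp (P X) X) • P X ∈ AF P := by
  obtain ⟨n, c, hc0, hcmem, rfl⟩ := ha
  refine ⟨n + 1, Fin.snoc c X, ?_, ?_, (chainCoef_snoc hPnn hPpos n c X).symm⟩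
  · have : ((0 : Fin (n + 2))) = (0 : Fin (n + 1)).castSucc := by simp
    rw [this, Fin.snoc_castSucc, hc0]
  · intro i
    refine Fin.lastCases ?_ (fun j => ?_) i
    · rw [Fin.snoc_last]; exact hX
    · rw [Fin.snoc_castSucc]; exact hcmem j

lemma AF_lower
    (hHARP : ∀ (k : ℕ) (Xs : Fin (k + 1) → V m), (∀ i, Xs i ∈ Rplus (Fin m)) →
      (∏ i, dotp (P (Xs i)) (Xs i)) ≤ ∏ i, dotp (P (Xs i)) (Xs (i + 1))) :
    ∀ a ∈ AF P, ∀ X ∈ Rplus (Fin m),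
      dotp (P X) X ≤ dotp a X * dotp (P X) (ones m) := by
  rintro a ⟨n, c, hc0, hcmem, rfl⟩ X hX
  set Xs : Fin (n + 2) → V m := Fin.snoc c X with hXs
  have hXsmem : ∀ i, Xs i ∈ Rplus (Fin m) := by
    intro i
    refine Fin.lastCases ?_ (fun j => ?_) i <;>
      simp only [hXs, Fin.snoc_last, Fin.snoc_castSucc]
    · exact hX
    · exact hcmem j
  have harp := hHARP (n + 1) Xs hXsmem
  -- rewrite LHS of harp
  have hL : (∏ i, dotp (P (Xs i)) (Xs i)) =
      ((∏ s : Fin n, dotp (P (c s.castSucc)) (c s.castSucc)) *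
        dotp (P (c (Fin.last n))) (c (Fin.last n))) * dotp (P X) X := by
    rw [Fin.prod_univ_castSucc]
    simp only [hXs, Fin.snoc_castSucc, Fin.snoc_last]
    rw [Fin.prod_univ_castSucc]
  have hR : (∏ i, dotp (P (Xs i)) (Xs (i + 1))) =
      ((∏ s : Fin n, dotp (P (c s.castSucc)) (c s.succ)) *
        dotp (P (c (Fin.last n))) X) * dotp (P X) (ones m) := by
    rw [Fin.prod_univ_castSucc]
    have h1 : ∀ t : Fin (n + 1), (t.castSucc : Fin (n + 2)) + 1 = t.succ := fun t =>
      Fin.coeSucc_eq_succ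
    have h2 : (Fin.last (n + 1) : Fin (n + 2)) + 1 = 0 := Fin.last_add_one (n + 1)
    simp only [h1, h2]
    simp only [hXs, Fin.snoc_last, Fin.snoc_castSucc]
    have h3 : (Fin.snoc c X : Fin (n+2) → V m) 0 = ones m := by
      have : ((0 : Fin (n + 2))) = (0 : Fin (n + 1)).castSucc := by simp
      rw [this, Fin.snoc_castSucc, hc0]
    rw [h3, Fin.prod_univ_castSucc]
    simp only [Fin.succ_castSucc, Fin.snoc_castSucc, Fin.succ_last, Fin.snoc_last]
  rw [hL, hR] at harp
  -- abbreviations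
  set B := ∏ s : Fin n, dotp (P (c s.castSucc)) (c s.castSucc) with hB
  set A' := ∏ s : Fin n, dotp (P (c s.castSucc)) (c s.succ) with hA'
  set D' := dotp (P (c (Fin.last n))) (c (Fin.last n)) with hD'
  set u := dotp (P (c (Fin.last n))) X with hu
  set w := dotp (P X) (ones m) with hw
  have hBpos : 0 < B := Finset.prod_pos fun s _ => hPpos _ (hcmem _)
  have hD'pos : 0 < D' := hPpos _ (hcmem _)
  have hda : dotp (chainCoef P n c) X = ((A' / B) / D') * u := by
    unfold chainCoef
    rw [dotp_smul_left, Finset.prod_div_distrib, ← hA', ← hB, ← hD', ← hu]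
  rw [hda]
  have key : ((A' / B) / D') * u * w = (A' * u * w) / (B * D') := by
    field_simp
  rw [key, le_div_iff₀ (by positivity)]
  nlinarith [harp]

end chains

section indices
variable {P : V m → V m}
variable (hPnn : ∀ X ∈ Rplus (Fin m), ∀ i, 0 ≤ P X i)
    (hPpos : ∀ X ∈ Rplus (Fin m), 0 < dotp (P X) X)
include hPnn hPpos

lemma exists_QF (hm : 0 < m)
    (hHARP : ∀ (k : ℕ) (Xs : Fin (k + 1) → V m), (∀ i, Xs i ∈ Rplus (Fin m)) →
      (∏ i, dotp (P (Xs i)) (Xs i)) ≤ ∏ i, dotp (P (Xs i)) (Xs (i + 1))) :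
    ∃ Q F : V m → ℝ, IsPhiH Q ∧ IsPhiH F ∧
      (∀ Pv ∈ Rplus (Fin m), ∀ X ∈ Rplus (Fin m), Q Pv * F X ≤ dotp Pv X) ∧
      (∀ X ∈ Rplus (Fin m), Q (P X) * F X = dotp (P X) X) := by
  have hω : ones m ∈ Rplus (Fin m) := ones_mem hm
  set F : V m → ℝ := gfun (AF P) with hFdef
  have hAF0 : ∀ a ∈ AF P, ∀ i, 0 ≤ a i := AF_nonneg hPnn hPpos
  set a0 : V m := chainCoef P 0 (fun _ => ones m) with ha0def
  have ha0 : a0 ∈ AF P := ⟨0, fun _ => ones m, rfl, fun _ => hω, rfl⟩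
  have hAFne : (AF P).Nonempty := ⟨a0, ha0⟩
  have hEω : 0 < dotp (P (ones m)) (ones m) := hPpos _ hω
  have hda0 : ∀ Y, dotp a0 Y = dotp (P (ones m)) Y / dotp (P (ones m)) (ones m) := by
    intro Y
    rw [ha0def]
    unfold chainCoef
    rw [dotp_smul_left]
    simp only [Finset.univ_eq_empty, Finset.prod_empty]
    ring
  have hwpos : ∀ X ∈ Rplus (Fin m), 0 < dotp (P X) (ones m) := by
    intro X hX
    obtain ⟨i, hi⟩ := exists_pos_coord (PX_mem hPnn hPpos hX)
    exact dotp_ones_pos (fun j => hPnn X hX j) i hi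
  have hFlow : ∀ X ∈ Rplus (Fin m),
      dotp (P X) X / dotp (P X) (ones m) ≤ F X := by
    intro X hX
    refine le_gfun hAFne hAF0 fun a ha => ?_
    rw [div_le_iff₀ (hwpos X hX)]
    exact AF_lower hPnn hPpos hHARP a ha X hX
  have hFpos : ∀ X ∈ Rplus (Fin m), 0 < F X := fun X hX =>
    lt_of_lt_of_le (div_pos (hPpos X hX) (hwpos X hX)) (hFlow X hX)
  have hFub : ∀ Y : V m, 0 ≤ Y →
      F Y ≤ dotp (P (ones m)) Y / dotp (P (ones m)) (ones m) := by
    intro Y hY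
    rw [← hda0]
    exact gfun_le hAFne hAF0 hY ha0
  have hFones : F (ones m) = 1 := by
    apply le_antisymm
    · have := hFub (ones m) hω.1
      rwa [div_self (ne_of_gt hEω)] at this
    · refine le_gfun hAFne hAF0 fun a ha => ?_
      have := AF_lower hPnn hPpos hHARP a ha (ones m) hω
      nlinarith
  have hKI : ∀ X ∈ Rplus (Fin m), ∀ Y ∈ Rplus (Fin m),
      dotp (P X) X * F Y ≤ F X * dotp (P X) Y := by
    intro X hX Y hY
    have hEX := hPpos X hX
    have hstep : ∀ a ∈ AF P,
        dotp (P X) X * F Y ≤ dotp a X * dotp (P X) Y := by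
      intro a ha
      have h1 : F Y ≤ dotp (((dotp a X) / dotp (P X) X) • P X) Y :=
        gfun_le hAFne hAF0 hY.1 (AF_ext hPnn hPpos ha hX)
      rw [dotp_smul_left] at h1
      calc dotp (P X) X * F Y
          ≤ dotp (P X) X * (dotp a X / dotp (P X) X * dotp (P X) Y) :=
            mul_le_mul_of_nonneg_left h1 hEX.le
        _ = dotp a X * dotp (P X) Y := by field_simp
    have hcc : 0 ≤ dotp (P X) Y := dotp_nonneg (hPnn X hX) hY.1
    rcases eq_or_lt_of_le hcc with h0 | hpos
    · obtain ⟨a, ha⟩ := hAFne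
      have := hstep a ha
      rw [← h0] at this ⊢
      simpa using this
    · have hstep' : ∀ a ∈ AF P, dotp (P X) X * F Y / dotp (P X) Y ≤ dotp a X :=
        fun a ha => (div_le_iff₀ hpos).mpr (hstep a ha)
      have hfin := le_gfun hAFne hAF0 hstep'
      rw [div_le_iff₀ hpos] at hfin
      exact hfin
  -- the price index
  set AQ : Set (V m) := {Y | 0 ≤ Y ∧ 1 ≤ F Y} with hAQdef
  set Q : V m → ℝ := gfun AQ with hQdef
  have hAQ0 : ∀ a ∈ AQ, ∀ i, 0 ≤ a i := fun a ha i => ha.1 i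
  have hAQne : AQ.Nonempty := ⟨ones m, hω.1, le_of_eq hFones.symm⟩
  have hAQR : ∀ Y ∈ AQ, Y ∈ Rplus (Fin m) := by
    intro Y hY
    refine ⟨hY.1, fun h0 => ?_⟩
    have hF0 : F (0 : V m) ≤ 0 := by
      have := gfun_le hAFne hAF0 (le_refl (0 : V m)) ha0
      rwa [dotp_zero_right] at this
    have := hY.2
    rw [h0] at this
    linarith
  have hQF : ∀ p : V m, 0 ≤ p → ∀ X ∈ Rplus (Fin m), Q p * F X ≤ dotp p X := by
    intro p hp X hX
    have hFX := hFpos X hX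
    have hFY' : F ((F X)⁻¹ • X) = 1 := by
      rw [hFdef, gfun_homog hAFne hAF0 hX.1 (inv_pos.mpr hFX), ← hFdef,
        inv_mul_cancel₀ (ne_of_gt hFX)]
    have hY'AQ : (F X)⁻¹ • X ∈ AQ := ⟨smul_nonneg (inv_nonneg.mpr hFX.le) hX.1,
      le_of_eq hFY'.symm⟩
    have h1 : Q p ≤ dotp ((F X)⁻¹ • X) p := gfun_le hAQne hAQ0 hp hY'AQ
    rw [dotp_smul_left, dotp_comm] at h1
    calc Q p * F X ≤ ((F X)⁻¹ * dotp p X) * F X :=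
          mul_le_mul_of_nonneg_right h1 hFX.le
      _ = dotp p X := by field_simp
  have hQeq : ∀ X ∈ Rplus (Fin m), Q (P X) * F X = dotp (P X) X := by
    intro X hX
    have hFX := hFpos X hX
    have hEX := hPpos X hX
    refine le_antisymm (hQF (P X) (fun i => hPnn X hX i) X hX) ?_
    have h2 : dotp (P X) X / F X ≤ Q (P X) := by
      refine le_gfun hAQne hAQ0 fun Y hY => ?_
      have hYR := hAQR Y hY
      have hki := hKI X hX Y hYR
      have h1le : 1 ≤ F Y := hY.2
      rw [dotp_comm Y (P X), div_le_iff₀ hFX]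
      nlinarith [hki, h1le, hEX]
    rw [div_le_iff₀ hFX] at h2
    linarith
  have hQones : 0 < Q (ones m) := by
    have hne' : Nonempty (Fin m) := ⟨⟨0, hm⟩⟩
    set i0 : Fin m := ⟨0, hm⟩ with hi0
    set M : ℝ := Finset.univ.sup' Finset.univ_nonempty (fun i => P (ones m) i) with hM
    have hM0 : 0 ≤ M :=
      le_trans (hPnn _ hω i0) (Finset.le_sup' (fun i => P (ones m) i) (Finset.mem_univ i0))
    have key : ∀ Y ∈ AQ, dotp (P (ones m)) (ones m) / (M + 1) ≤ dotp Y (ones m) := by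
      intro Y hY
      have h1 : dotp (P (ones m)) (ones m) ≤ dotp (P (ones m)) Y := by
        have := hFub Y hY.1
        have h2 := hY.2
        have h2 : (1:ℝ) ≤ dotp (P (ones m)) Y / dotp (P (ones m)) (ones m) :=
          le_trans hY.2 (hFub Y hY.1)
        rw [le_div_iff₀ hEω] at h2
        linarith
      have h3 : dotp (P (ones m)) Y ≤ (M + 1) * dotp Y (ones m) := by
        unfold dotp
        rw [Finset.mul_sum]
        refine Finset.sum_le_sum fun i _ => ?_
        have hle : P (ones m) i ≤ M := Finset.le_sup' _ (Finset.mem_univ i)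
        have hYi : (0:ℝ) ≤ Y i := by simpa using hY.1 i
        simp only [ones]
        nlinarith [mul_le_mul_of_nonneg_right hle hYi]
      rw [div_le_iff₀ (by linarith : (0:ℝ) < M + 1)]
      nlinarith
    have hb : 0 < dotp (P (ones m)) (ones m) / (M + 1) := by positivity
    exact lt_of_lt_of_le hb (le_gfun hAQne hAQ0 key)
  refine ⟨Q, F, isPhiH_gfun hAQne hAQ0 hQones,
    isPhiH_gfun hAFne hAF0 (by rw [← hFdef, hFones]; norm_num), ?_, hQeq⟩
  exact fun Pv hPv X hX => hQF Pv hPv.1 X hX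

end indices

section impls
variable {P : V m → V m}

lemma contE (hPcont : ContinuousOn P (Rplus (Fin m))) :
    ContinuousOn (fun X => dotp (P X) X) (Rplus (Fin m)) := by
  unfold dotp
  apply continuousOn_finset_sum
  intro i _
  exact (((continuous_apply i).comp_continuousOn hPcont).mul ((continuous_apply i).continuousOn))

lemma impl12 (hPnn : ∀ X ∈ Rplus (Fin m), ∀ i, 0 ≤ P X i)
    (hPcont : ContinuousOn P (Rplus (Fin m)))
    (hPpos : ∀ X ∈ Rplus (Fin m), 0 < dotp (P X) X)
    (h1 : ∃ u : V m → ℝ, IsPhiH u ∧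
      ∀ X ∈ Rplus (Fin m), ∀ Y ∈ Rplus (Fin m),
        dotp (P X) Y ≤ dotp (P X) X → u Y ≤ u X) :
    ∃ lam : V m → ℝ,
      (∀ X ∈ interior (Rplus (Fin m)), 0 < lam X) ∧
      ContinuousOn lam (interior (Rplus (Fin m))) ∧
      ∀ X ∈ Rplus (Fin m), ∀ Y ∈ Rplus (Fin m),
        lam X * dotp (P X) X ≤ lam Y * dotp (P Y) X := by
  obtain ⟨u, ⟨hG, hH⟩, hrat⟩ := h1
  refine ⟨fun X => u X / dotp (P X) X, ?_, ?_, ?_⟩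
  · exact fun X hX => div_pos (hG.pos X hX) (hPpos _ (interior_subset hX))
  · exact ContinuousOn.div (hG.cont.mono interior_subset)
      ((contE hPcont).mono interior_subset)
      (fun X hX => ne_of_gt (hPpos _ (interior_subset hX)))
  · intro X hX Y hY
    have hEX := hPpos X hX
    have hEY := hPpos Y hY
    rw [div_mul_cancel₀ _ (ne_of_gt hEX)]
    have hc : 0 ≤ dotp (P Y) X := dotp_nonneg (hPnn Y hY) hX.1
    rcases eq_or_lt_of_le hc with h0 | hpos
    · rw [← h0, mul_zero]
      by_contra hu
      push_neg at hu
      have hupos : 0 < u X := hu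
      have huY : 0 ≤ u Y := hG.nonneg Y hY
      set t : ℝ := (u Y + 1) / u X with ht
      have htpos : 0 < t := by positivity
      have hmem : t • X ∈ Rplus (Fin m) := by
        refine ⟨smul_nonneg htpos.le hX.1, fun hz => ?_⟩
        apply hX.2
        funext i
        have := congrFun hz i
        simp only [Pi.smul_apply, smul_eq_mul, Pi.zero_apply] at this ⊢
        have := mul_eq_zero.mp this
        rcases this with h | h
        · exact absurd h (ne_of_gt htpos)
        · exact h
      have hbud : dotp (P Y) (t • X) ≤ dotp (P Y) Y := by
        rw [dotp_smul_right, ← h0, mul_zero]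
        exact hEY.le
      have := hrat Y hY (t • X) hmem hbud
      rw [hH X hX t htpos, ht] at this
      rw [div_mul_cancel₀ _ (ne_of_gt hupos)] at this
      linarith
    · set α : ℝ := dotp (P Y) Y / dotp (P Y) X with hα
      have hαpos : 0 < α := div_pos hEY hpos
      have hmem : α • X ∈ Rplus (Fin m) := by
        refine ⟨smul_nonneg hαpos.le hX.1, fun hz => ?_⟩
        apply hX.2
        funext i
        have := congrFun hz i
        simp only [Pi.smul_apply, smul_eq_mul, Pi.zero_apply] at this ⊢
        rcases mul_eq_zero.mp this with h | h
        · exact absurd h (ne_of_gt hαpos)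
        · exact h
      have hbud : dotp (P Y) (α • X) ≤ dotp (P Y) Y := by
        rw [dotp_smul_right, hα, div_mul_cancel₀ _ (ne_of_gt hpos)]
      have h2 := hrat Y hY (α • X) hmem hbud
      rw [hH X hX α hαpos] at h2
      rw [div_mul_eq_mul_div, le_div_iff₀ hEY]
      calc u X * dotp (P Y) Y = (α * u X) * dotp (P Y) X := by
            rw [hα]; field_simp
        _ ≤ u Y * dotp (P Y) X := mul_le_mul_of_nonneg_right h2 hc

lemma impl41 (hPnn : ∀ X ∈ Rplus (Fin m), ∀ i, 0 ≤ P X i)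
    (hPpos : ∀ X ∈ Rplus (Fin m), 0 < dotp (P X) X)
    (h4 : ∃ Q F : V m → ℝ, IsPhiH Q ∧ IsPhiH F ∧
      (∀ Pv ∈ Rplus (Fin m), ∀ X ∈ Rplus (Fin m), Q Pv * F X ≤ dotp Pv X) ∧
      (∀ X ∈ Rplus (Fin m), Q (P X) * F X = dotp (P X) X)) :
    ∃ u : V m → ℝ, IsPhiH u ∧
      ∀ X ∈ Rplus (Fin m), ∀ Y ∈ Rplus (Fin m),
        dotp (P X) Y ≤ dotp (P X) X → u Y ≤ u X := by
  obtain ⟨Q, F, hQ, hF, hle, heq⟩ := h4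
  refine ⟨F, hF, fun X hX Y hY hbud => ?_⟩
  have hPXmem : P X ∈ Rplus (Fin m) := PX_mem hPnn hPpos hX
  have hQpos : 0 < Q (P X) := by
    rcases lt_or_ge 0 (Q (P X)) with h | h
    · exact h
    · exfalso
      have h1 := heq X hX
      have h2 := hPpos X hX
      have h3 : 0 ≤ F X := hF.1.nonneg X hX
      nlinarith
  have h5 : Q (P X) * F Y ≤ Q (P X) * F X := by
    calc Q (P X) * F Y ≤ dotp (P X) Y := hle (P X) hPXmem Y hY
      _ ≤ dotp (P X) X := hbud
      _ = Q (P X) * F X := (heq X hX).symm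
  exact le_of_mul_le_mul_left h5 hQpos

lemma impl23 (hPnn : ∀ X ∈ Rplus (Fin m), ∀ i, 0 ≤ P X i)
    (hPcont : ContinuousOn P (Rplus (Fin m)))
    (hPpos : ∀ X ∈ Rplus (Fin m), 0 < dotp (P X) X)
    (h2 : ∃ lam : V m → ℝ,
      (∀ X ∈ interior (Rplus (Fin m)), 0 < lam X) ∧
      ContinuousOn lam (interior (Rplus (Fin m))) ∧
      ∀ X ∈ Rplus (Fin m), ∀ Y ∈ Rplus (Fin m),
        lam X * dotp (P X) X ≤ lam Y * dotp (P Y) X) :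
    ∀ (k : ℕ) (Xs : Fin (k + 1) → V m), (∀ i, Xs i ∈ Rplus (Fin m)) →
      (∏ i, dotp (P (Xs i)) (Xs i)) ≤ ∏ i, dotp (P (Xs i)) (Xs (i + 1)) := by
  obtain ⟨lam, hlpos, _, hsys⟩ := h2
  intro k Xs hXs
  obtain ⟨i0, _⟩ := exists_pos_coord (hXs 0)
  have hm : 0 < m := i0.pos
  set T : ℝ → Fin (k + 1) → V m := fun t i => Xs i + t • ones m with hT
  -- step 1 : the inequality at interior points
  have step1 : ∀ t : ℝ, 0 < t →
      (∏ i, dotp (P (T t i)) (T t i)) ≤ ∏ i, dotp (P (T t i)) (T t (i + 1)) := by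
    intro t ht
    have hint : ∀ i, T t i ∈ interior (Rplus (Fin m)) := by
      intro i
      refine mem_interior_of_pos hm fun j => ?_
      have h1 := (hXs i).1 j
      simp only [hT, Pi.add_apply, Pi.smul_apply, smul_eq_mul, ones]
      have : (0:ℝ) ≤ Xs i j := by simpa using (hXs i).1 j
      nlinarith
    have hR : ∀ i, T t i ∈ Rplus (Fin m) := fun i => interior_subset (hint i)
    have hineq : ∀ i ∈ Finset.univ,
        lam (T t (i + 1)) * dotp (P (T t (i + 1))) (T t (i + 1)) ≤
          lam (T t i) * dotp (P (T t i)) (T t (i + 1)) :=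
      fun i _ => hsys _ (hR (i + 1)) _ (hR i)
    have hnn : ∀ i ∈ Finset.univ,
        (0:ℝ) ≤ lam (T t (i + 1)) * dotp (P (T t (i + 1))) (T t (i + 1)) :=
      fun i _ => mul_nonneg (hlpos _ (hint (i + 1))).le (hPpos _ (hR (i + 1))).le
    have hprodle := Finset.prod_le_prod hnn hineq
    have hshift : (∏ i, lam (T t (i + 1)) * dotp (P (T t (i + 1))) (T t (i + 1))) =
        ∏ i, lam (T t i) * dotp (P (T t i)) (T t i) := by
      have := Equiv.prod_comp (Equiv.addRight (1 : Fin (k + 1)))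
        (fun i => lam (T t i) * dotp (P (T t i)) (T t i))
      simpa [Equiv.coe_addRight] using this
    rw [hshift] at hprodle
    rw [Finset.prod_mul_distrib] at hprodle
    conv_rhs at hprodle => rw [Finset.prod_mul_distrib]
    have hlprod : 0 < ∏ i, lam (T t i) := Finset.prod_pos fun i _ => hlpos _ (hint i)
    exact le_of_mul_le_mul_left hprodle hlprod
  -- step 2 : pass to the limit t → 0⁺
  have htendT : ∀ i : Fin (k + 1), Filter.Tendsto (fun t => T t i)
      (nhdsWithin 0 (Set.Ioi 0)) (nhdsWithin (Xs i) (Rplus (Fin m))) := by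
    intro i
    rw [tendsto_nhdsWithin_iff]
    constructor
    · have hc : Continuous fun t : ℝ => Xs i + t • ones m := by
        exact continuous_const.add (continuous_id.smul continuous_const)
      have h0 : Xs i + (0:ℝ) • ones m = Xs i := by simp
      have h1 := hc.tendsto 0
      rw [h0] at h1
      exact h1.mono_left nhdsWithin_le_nhds
    · refine eventually_nhdsWithin_of_forall fun t ht => ?_
      have htpos : (0:ℝ) < t := ht
      refine ⟨fun j => ?_, fun hz => ?_⟩
      · have hx : (0:ℝ) ≤ Xs i j := by simpa using (hXs i).1 j
        have h2 : (0:ℝ) ≤ Xs i j + t * 1 := by nlinarith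
        simpa [hT, ones] using h2
      · have := congrFun hz ⟨0, hm⟩
        have h1 : (0:ℝ) ≤ Xs i ⟨0, hm⟩ := by simpa using (hXs i).1 ⟨0, hm⟩
        simp only [hT, Pi.add_apply, Pi.smul_apply, smul_eq_mul, ones,
          Pi.zero_apply] at this
        nlinarith
  have htendP : ∀ i : Fin (k + 1), Filter.Tendsto (fun t => P (T t i))
      (nhdsWithin 0 (Set.Ioi 0)) (nhds (P (Xs i))) := fun i =>
    (hPcont (Xs i) (hXs i)).tendsto.comp (htendT i)
  have htend1 : Filter.Tendsto (fun t => ∏ i, dotp (P (T t i)) (T t i))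
      (nhdsWithin 0 (Set.Ioi 0)) (nhds (∏ i, dotp (P (Xs i)) (Xs i))) :=
    tendsto_finset_prod _ fun i _ =>
      tendsto_dotp (htendP i) ((htendT i).mono_right nhdsWithin_le_nhds)
  have htend2 : Filter.Tendsto (fun t => ∏ i, dotp (P (T t i)) (T t (i + 1)))
      (nhdsWithin 0 (Set.Ioi 0)) (nhds (∏ i, dotp (P (Xs i)) (Xs (i + 1)))) :=
    tendsto_finset_prod _ fun i _ =>
      tendsto_dotp (htendP i) ((htendT (i + 1)).mono_right nhdsWithin_le_nhds)
  refine le_of_tendsto_of_tendsto htend1 htend2 ?_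
  exact eventually_nhdsWithin_of_forall fun t ht => step1 t ht

end impls

lemma Rplus_fin_zero : Rplus (Fin 0) = ∅ := by
  ext X
  have hX0 : X = 0 := funext fun i => absurd i.2 (by omega)
  simp [Rplus, hX0]

lemma isPhiH_const_zero (h : Rplus (Fin m) = ∅) : IsPhiH (fun _ : V m => (0:ℝ)) := by
  have hint : interior (Rplus (Fin m)) = ∅ := by rw [h, interior_empty]
  refine ⟨⟨fun X hX => le_refl 0, continuousOn_const, fun X hX => ?_, fun X hX => ?_,
    fun X hX => ?_, fun X hX => ?_⟩, fun X hX => ?_⟩ <;>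
  first
    | (rw [h] at hX; exact absurd hX (Set.notMem_empty X))
    | (rw [hint] at hX; exact absurd hX (Set.notMem_empty X))

end RatAux

/-- Rationalizability of inverse demand functions in `Φ_H` : equivalence of
(1) rationalizability, (2) the functional homothetic Afriat system,
(3) HARP, and (4) existence of Konüs-Divisia price and consumption indices. -/
theorem inverse_demand_rationalizable_phiH_tfae {m : ℕ}
    (P : (Fin m → ℝ) → (Fin m → ℝ))
    (hPnn : ∀ X ∈ Rplus (Fin m), ∀ i, 0 ≤ P X i)
    (hPcont : ContinuousOn P (Rplus (Fin m)))
    (hPpos : ∀ X ∈ Rplus (Fin m), 0 < dotp (P X) X) :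
    ((∃ u : (Fin m → ℝ) → ℝ, IsPhiH u ∧
        ∀ X ∈ Rplus (Fin m), ∀ Y ∈ Rplus (Fin m),
          dotp (P X) Y ≤ dotp (P X) X → u Y ≤ u X) ↔
      (∃ lam : (Fin m → ℝ) → ℝ,
        (∀ X ∈ interior (Rplus (Fin m)), 0 < lam X) ∧
        ContinuousOn lam (interior (Rplus (Fin m))) ∧
        ∀ X ∈ Rplus (Fin m), ∀ Y ∈ Rplus (Fin m),
          lam X * dotp (P X) X ≤ lam Y * dotp (P Y) X)) ∧
    ((∃ lam : (Fin m → ℝ) → ℝ,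
        (∀ X ∈ interior (Rplus (Fin m)), 0 < lam X) ∧
        ContinuousOn lam (interior (Rplus (Fin m))) ∧
        ∀ X ∈ Rplus (Fin m), ∀ Y ∈ Rplus (Fin m),
          lam X * dotp (P X) X ≤ lam Y * dotp (P Y) X) ↔
      (∀ (k : ℕ) (Xs : Fin (k + 1) → Fin m → ℝ), (∀ i, Xs i ∈ Rplus (Fin m)) →
        (∏ i, dotp (P (Xs i)) (Xs i)) ≤ ∏ i, dotp (P (Xs i)) (Xs (i + 1)))) ∧
    ((∀ (k : ℕ) (Xs : Fin (k + 1) → Fin m → ℝ), (∀ i, Xs i ∈ Rplus (Fin m)) →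
        (∏ i, dotp (P (Xs i)) (Xs i)) ≤ ∏ i, dotp (P (Xs i)) (Xs (i + 1))) ↔
      (∃ Q F : (Fin m → ℝ) → ℝ, IsPhiH Q ∧ IsPhiH F ∧
        (∀ Pv ∈ Rplus (Fin m), ∀ X ∈ Rplus (Fin m), Q Pv * F X ≤ dotp Pv X) ∧
        (∀ X ∈ Rplus (Fin m), Q (P X) * F X = dotp (P X) X))) := by
  have h12 := RatAux.impl12 hPnn hPcont hPpos
  have h23 := RatAux.impl23 hPnn hPcont hPpos
  have h41 := RatAux.impl41 hPnn hPpos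
  have h34 : (∀ (k : ℕ) (Xs : Fin (k + 1) → Fin m → ℝ), (∀ i, Xs i ∈ Rplus (Fin m)) →
        (∏ i, dotp (P (Xs i)) (Xs i)) ≤ ∏ i, dotp (P (Xs i)) (Xs (i + 1))) →
      (∃ Q F : (Fin m → ℝ) → ℝ, IsPhiH Q ∧ IsPhiH F ∧
        (∀ Pv ∈ Rplus (Fin m), ∀ X ∈ Rplus (Fin m), Q Pv * F X ≤ dotp Pv X) ∧
        (∀ X ∈ Rplus (Fin m), Q (P X) * F X = dotp (P X) X)) := by
    intro h3
    rcases Nat.eq_zero_or_pos m with hm | hm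
    · subst hm
      have hemp : Rplus (Fin 0) = ∅ := RatAux.Rplus_fin_zero
      exact ⟨fun _ => 0, fun _ => 0, RatAux.isPhiH_const_zero hemp,
        RatAux.isPhiH_const_zero hemp,
        fun Pv hPv => by rw [hemp] at hPv; exact absurd hPv (Set.notMem_empty Pv),
        fun X hX => by rw [hemp] at hX; exact absurd hX (Set.notMem_empty X)⟩
    · exact RatAux.exists_QF hPnn hPpos hm h3
  exact ⟨⟨h12, fun h2 => h41 (h34 (h23 h2))⟩,
    ⟨h23, fun h3 => h12 (h41 (h34 h3))⟩,
    ⟨h34, fun h4 => h23 (h12 (h41 h4))⟩⟩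
end
end

section
/- Let P : ℝ^m_+ → ℝ^m be an inverse demand map, i.e. P is nonnegative and continuous on ℝ^m_+ with ⟨P(X), X⟩ > 0 for all X ∈ ℝ^m_+. Suppose Q, F ∈ Φ_H satisfy Q(P')F(X) ≤ ⟨P', X⟩ for all P' ∈ ℝ^m_+ and X ∈ ℝ^m_+, and Q(P(X))F(X) = ⟨P(X), X⟩ for all X ∈ ℝ^m_+. Then Q(P(X)) > 0 for all X in the interior of ℝ^m_+, and the function λ(X) = 1/Q(P(X)) is positive and continuous on the interior of ℝ^m_+ and satisfies λ(Y)⟨P(Y), X⟩ ≥ λ(X)⟨P(X), X⟩ for all X, Y in the interior of ℝ^m_+. -/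
open scoped BigOperators

noncomputable section

/-- If `Q, F ∈ Φ_H` are Konüs-Divisia indices for the inverse demand map `P`,
then `λ(X) = 1/Q(P(X))` is a positive continuous solution of the homothetic
Afriat system on the interior of `ℝ^m_+`. -/
theorem lambda_from_indices {m : ℕ}
    (P : (Fin m → ℝ) → (Fin m → ℝ))
    (hPnn : ∀ X ∈ Rplus (Fin m), ∀ i, 0 ≤ P X i)
    (hPcont : ContinuousOn P (Rplus (Fin m)))
    (hPpos : ∀ X ∈ Rplus (Fin m), 0 < dotp (P X) X)
    (Q F : (Fin m → ℝ) → ℝ) (hQ : IsPhiH Q) (hF : IsPhiH F)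
    (hineq : ∀ Pv ∈ Rplus (Fin m), ∀ X ∈ Rplus (Fin m), Q Pv * F X ≤ dotp Pv X)
    (heq : ∀ X ∈ Rplus (Fin m), Q (P X) * F X = dotp (P X) X) :
    (∀ X ∈ interior (Rplus (Fin m)), 0 < Q (P X)) ∧
    (∀ X ∈ interior (Rplus (Fin m)), 0 < 1 / Q (P X)) ∧
    ContinuousOn (fun X => 1 / Q (P X)) (interior (Rplus (Fin m))) ∧
    (∀ X ∈ interior (Rplus (Fin m)), ∀ Y ∈ interior (Rplus (Fin m)),
      (1 / Q (P X)) * dotp (P X) X ≤ (1 / Q (P Y)) * dotp (P Y) X) := by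
  have hsub : interior (Rplus (Fin m)) ⊆ Rplus (Fin m) := interior_subset
  have hPmem : ∀ X ∈ Rplus (Fin m), P X ∈ Rplus (Fin m) := by
    intro X hX
    refine ⟨fun i => hPnn X hX i, ?_⟩
    intro h0
    have := hPpos X hX
    rw [h0] at this
    simp [dotp] at this
  have hQpos : ∀ X ∈ interior (Rplus (Fin m)), 0 < Q (P X) := by
    intro X hX
    have hXR := hsub hX
    have hF' := hF.1.pos X hX
    have hd := hPpos X hXR
    have he := heq X hXR
    nlinarith
  refine ⟨hQpos, fun X hX => one_div_pos.mpr (hQpos X hX), ?_, ?_⟩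
  · apply ContinuousOn.div continuousOn_const
    · exact (hQ.1.cont.comp hPcont (fun X hX => hPmem X hX)).mono interior_subset
    · intro X hX; exact (hQpos X hX).ne'
  · intro X hX Y hY
    have hXR := hsub hX
    have hYR := hsub hY
    have h1 : (1 / Q (P X)) * dotp (P X) X = F X := by
      rw [← heq X hXR, one_div, inv_mul_eq_div, mul_div_cancel_left₀ _ (hQpos X hX).ne']
    have h2 : Q (P Y) * F X ≤ dotp (P Y) X := hineq (P Y) (hPmem Y hYR) X hXR
    have hq := hQpos Y hY
    rw [h1, one_div, inv_mul_eq_div, le_div_iff₀ hq]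
    nlinarith
end
end

section
/- Let P : ℝ^m_+ → ℝ^m be an inverse demand map, i.e. P is nonnegative and continuous on ℝ^m_+ with ⟨P(X), X⟩ > 0 for all X ∈ ℝ^m_+, and let λ : ℝ^m_+ → ℝ be positive and satisfy λ(Y)⟨P(Y), X⟩ ≥ λ(X)⟨P(X), X⟩ for all X, Y ∈ ℝ^m_+. Define F(X) = inf{λ(Y)⟨P(Y), X⟩ : Y ∈ ℝ^m_+} and Q(P') = inf{⟨P', Y⟩/F(Y) : Y ∈ ℝ^m_+, F(Y) > 0}. Then F(X) = λ(X)⟨P(X), X⟩ and Q(P(X)) = 1/λ(X) for all X ∈ ℝ^m_+, and Q(P')F(X) ≤ ⟨P', X⟩ for all P' ∈ ℝ^m_+, X ∈ ℝ^m_+. -/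
open scoped BigOperators

noncomputable section

/-- Konüs-Divisia indices constructed from a solution `λ` of the homothetic
Afriat system: `F(X) = λ(X)⟨P(X), X⟩`, `Q(P(X)) = 1/λ(X)`, and
`Q(P')F(X) ≤ ⟨P', X⟩`. -/
theorem indices_from_lambda {m : ℕ}
    (P : (Fin m → ℝ) → (Fin m → ℝ))
    (hPnn : ∀ X ∈ Rplus (Fin m), ∀ i, 0 ≤ P X i)
    (hPcont : ContinuousOn P (Rplus (Fin m)))
    (hPpos : ∀ X ∈ Rplus (Fin m), 0 < dotp (P X) X)
    (lam : (Fin m → ℝ) → ℝ) (hlampos : ∀ X ∈ Rplus (Fin m), 0 < lam X)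
    (hsys : ∀ X ∈ Rplus (Fin m), ∀ Y ∈ Rplus (Fin m),
      lam X * dotp (P X) X ≤ lam Y * dotp (P Y) X)
    (F Q : (Fin m → ℝ) → ℝ)
    (hFdef : ∀ Z, F Z = sInf {r | ∃ Y ∈ Rplus (Fin m), r = lam Y * dotp (P Y) Z})
    (hQdef : ∀ Pv, Q Pv = sInf {r | ∃ Y ∈ Rplus (Fin m), 0 < F Y ∧ r = dotp Pv Y / F Y}) :
    (∀ X ∈ Rplus (Fin m), F X = lam X * dotp (P X) X) ∧
    (∀ X ∈ Rplus (Fin m), Q (P X) = 1 / lam X) ∧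
    (∀ Pv ∈ Rplus (Fin m), ∀ X ∈ Rplus (Fin m), Q Pv * F X ≤ dotp Pv X) := by
  have hF : ∀ X ∈ Rplus (Fin m), F X = lam X * dotp (P X) X := by
    intro X hX
    rw [hFdef X]
    apply le_antisymm
    · exact csInf_le ⟨lam X * dotp (P X) X, fun r ⟨Y, hY, hr⟩ => hr ▸ hsys X hX Y hY⟩
        ⟨X, hX, rfl⟩
    · exact le_csInf ⟨_, X, hX, rfl⟩ (fun r ⟨Y, hY, hr⟩ => hr ▸ hsys X hX Y hY)
  refine ⟨hF, ?_, ?_⟩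
  · intro X hX
    rw [hQdef (P X)]
    have hFX : F X = lam X * dotp (P X) X := hF X hX
    have hl := hlampos X hX
    have hd := hPpos X hX
    have hFXpos : 0 < F X := by rw [hFX]; exact mul_pos hl hd
    have hmem : dotp (P X) X / F X = 1 / lam X := by
      rw [hFX]; field_simp
    have key : ∀ r ∈ {r | ∃ Y ∈ Rplus (Fin m), 0 < F Y ∧ r = dotp (P X) Y / F Y},
        1 / lam X ≤ r := by
      rintro r ⟨Y, hY, hFYpos, rfl⟩
      rw [div_le_div_iff₀ hl hFYpos, one_mul]
      have h := hsys Y hY X hX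
      have hFY := hF Y hY
      nlinarith
    apply le_antisymm
    · exact csInf_le ⟨1 / lam X, key⟩ ⟨X, hX, hFXpos, hmem.symm⟩
    · exact le_csInf ⟨_, X, hX, hFXpos, hmem.symm⟩ key
  · intro Pv hPv X hX
    have hFX : 0 < F X := by rw [hF X hX]; exact mul_pos (hlampos X hX) (hPpos X hX)
    have hQle : Q Pv ≤ dotp Pv X / F X := by
      rw [hQdef Pv]
      apply csInf_le
      · refine ⟨0, ?_⟩
        rintro r ⟨Y, hY, hFYpos, rfl⟩
        apply div_nonneg _ hFYpos.le
        exact Finset.sum_nonneg fun i _ => mul_nonneg (hPv.1 i) (hY.1 i)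
      · exact ⟨X, hX, hFX, rfl⟩
    calc Q Pv * F X ≤ dotp Pv X / F X * F X := by
          exact mul_le_mul_of_nonneg_right hQle hFX.le
      _ = dotp Pv X := div_mul_cancel₀ _ hFX.ne'
end
end
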